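/- arXiv:2208.01244 — 10 statements merged into one kernel-verified Lean document; each statement's English description precedes it below -/
import Mathlib

section
/- Let P = {(x,y) ∈ ℝ^{p+n} : Ax + By ≤ d, 0 ≤ y ≤ 1} and P^⊥ = {(x,y) ∈ P : y_i·y_j = 0 ∀{i,j} ∈ E} for a simple graph G = ([n], E) with feasible cover partition 𝒯. For any polyhedron Q ⊆ ℝ^p × [0,1]^n with P^⊥ ⊆ Q, and any T ∈ 𝒯: conv(P^⊥) ⊆ proj_{x,y} ℰ_𝒯(Q) ⊆ conv((Q ∩ H_T) ∪ (Q ∩ H̄_T)), where ℰ_𝒯(Q) is the vertex-cover-based extended relaxation built from Q. -/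
open Matrix

private lemma dot_combo {k : ℕ} (w f g : Fin k → ℝ) (a b : ℝ) :
    w ⬝ᵥ (fun t => a * f t + b * g t) = a * (w ⬝ᵥ f) + b * (w ⬝ᵥ g) := by
  simp only [dotProduct, Finset.mul_sum, ← Finset.sum_add_distrib, mul_add]
  exact Finset.sum_congr rfl fun i _ => by ring

/-- Theorem 1: for any polyhedron `Q ⊆ ℝ^p × [0,1]^n` with `P^⊥ ⊆ Q` and any
member `T` of a feasible cover partition `𝒯`,
`conv(P^⊥) ⊆ proj_{x,y} ℰ_𝒯(Q) ⊆ conv((Q ∩ H_T) ∪ (Q ∩ H̄_T))`. -/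
theorem stmt_4 {p n m mQ : ℕ} (G : SimpleGraph (Fin n))
    (A : Fin m → Fin p → ℝ) (B : Fin m → Fin n → ℝ) (d : Fin m → ℝ)
    (AQ : Fin mQ → Fin p → ℝ) (BQ : Fin mQ → Fin n → ℝ) (dQ : Fin mQ → ℝ)
    (𝒯 : Set (Set (Fin n)))
    (hdisj : ∀ T₁ ∈ 𝒯, ∀ T₂ ∈ 𝒯, T₁ ≠ T₂ → ∀ i, i ∈ T₁ → i ∉ T₂)
    (hcover : ∀ i j : Fin n, G.Adj i j → (∃ T ∈ 𝒯, i ∈ T) ∨ (∃ T ∈ 𝒯, j ∈ T))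
    (hfeas : ∀ T ∈ 𝒯, ∀ i ∈ T, ∀ j : Fin n, G.Adj i j ↔ ∃ i' ∈ T, G.Adj i' j)
    (P Pperp Q : Set ((Fin p → ℝ) × (Fin n → ℝ)))
    (hP : P = {z | (∀ i, A i ⬝ᵥ z.1 + B i ⬝ᵥ z.2 ≤ d i) ∧ ∀ j, 0 ≤ z.2 j ∧ z.2 j ≤ 1})
    (hPperp : Pperp = {z ∈ P | ∀ i j : Fin n, G.Adj i j → z.2 i * z.2 j = 0})
    (hQ : Q = {z | (∀ i, AQ i ⬝ᵥ z.1 + BQ i ⬝ᵥ z.2 ≤ dQ i) ∧ ∀ j, 0 ≤ z.2 j ∧ z.2 j ≤ 1})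
    (hPQ : Pperp ⊆ Q)
    -- the projection onto `(x,y)` of the vertex-cover-based extended relaxation `ℰ_𝒯(Q)`
    (projE : Set ((Fin p → ℝ) × (Fin n → ℝ)))
    (hprojE : projE =
      {z | ∃ (q qb : Set (Fin n) → ℝ) (u ub : Set (Fin n) → Fin p → ℝ)
            (v vb : Set (Fin n) → Fin n → ℝ),
          ∀ S ∈ 𝒯,
            (∀ i, AQ i ⬝ᵥ u S + BQ i ⬝ᵥ v S ≤ dQ i * q S) ∧
            (∀ i, AQ i ⬝ᵥ ub S + BQ i ⬝ᵥ vb S ≤ dQ i * qb S) ∧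
            (∀ i ∈ S, vb S i = 0) ∧
            (∀ j : Fin n, (∃ i ∈ S, G.Adj i j) → v S j = 0) ∧
            (∀ j, 0 ≤ v S j ∧ v S j ≤ q S) ∧
            (∀ j, 0 ≤ vb S j ∧ vb S j ≤ qb S) ∧
            (∀ t, ub S t + u S t = z.1 t) ∧
            (∀ j, vb S j + v S j = z.2 j) ∧
            qb S + q S = 1 ∧ 0 ≤ q S ∧ 0 ≤ qb S})
    (T : Set (Fin n)) (hT : T ∈ 𝒯) :
    convexHull ℝ Pperp ⊆ projE ∧
      projE ⊆ convexHull ℝ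
        ((Q ∩ {z | ∀ i ∈ T, z.2 i = 0}) ∪
          (Q ∩ {z | ∀ j : Fin n, (∃ i ∈ T, G.Adj i j) → z.2 j = 0})) := by
  classical
  constructor
  · -- conv(P⊥) ⊆ projE
    apply convexHull_min
    · -- P⊥ ⊆ projE
      intro z hz
      have hzQ : z ∈ Q := hPQ hz
      rw [hQ] at hzQ
      obtain ⟨hzA, hzy⟩ := hzQ
      rw [hPperp] at hz
      obtain ⟨hzP, hprod⟩ := hz
      rw [hprojE]
      refine ⟨fun S => if ∀ i ∈ S, z.2 i = 0 then 0 else 1,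
              fun S => if ∀ i ∈ S, z.2 i = 0 then 1 else 0,
              fun S => if ∀ i ∈ S, z.2 i = 0 then 0 else z.1,
              fun S => if ∀ i ∈ S, z.2 i = 0 then z.1 else 0,
              fun S => if ∀ i ∈ S, z.2 i = 0 then 0 else z.2,
              fun S => if ∀ i ∈ S, z.2 i = 0 then z.2 else 0,
              fun S hS => ?_⟩
      by_cases hc : ∀ i ∈ S, z.2 i = 0
      · simp only [if_pos hc]
        refine ⟨fun i => by simp, fun i => by simpa using hzA i,
          fun i hi => hc i hi, fun j _ => rfl,
          fun j => by simp, fun j => hzy j,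
          fun t => by simp, fun j => by simp, by norm_num, le_refl _, by norm_num⟩
      · simp only [if_neg hc]
        push_neg at hc
        obtain ⟨i₀, hi₀S, hi₀⟩ := hc
        refine ⟨fun i => by simpa using hzA i, fun i => by simp,
          fun i _ => rfl, ?_, fun j => hzy j,
          fun j => by simp, fun t => by simp, fun j => by simp, by norm_num,
          by norm_num, le_refl _⟩
        rintro j ⟨i', hi', hadj⟩
        have hadj₀ : G.Adj i₀ j := (hfeas S hS i₀ hi₀S j).2 ⟨i', hi', hadj⟩
        have := hprod i₀ j hadj₀
        exact (mul_eq_zero.1 this).resolve_left hi₀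
    · -- projE is convex
      rw [hprojE]
      rintro z₁ ⟨q₁, qb₁, u₁, ub₁, v₁, vb₁, H₁⟩ z₂ ⟨q₂, qb₂, u₂, ub₂, v₂, vb₂, H₂⟩
        a b ha hb hab
      refine ⟨fun S => a * q₁ S + b * q₂ S, fun S => a * qb₁ S + b * qb₂ S,
              fun S t => a * u₁ S t + b * u₂ S t, fun S t => a * ub₁ S t + b * ub₂ S t,
              fun S j => a * v₁ S j + b * v₂ S j, fun S j => a * vb₁ S j + b * vb₂ S j,
              fun S hS => ?_⟩
      obtain ⟨c1, c2, c3, c4, c5, c6, c7, c8, c9, c10, c11⟩ := H₁ S hS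
      obtain ⟨e1, e2, e3, e4, e5, e6, e7, e8, e9, e10, e11⟩ := H₂ S hS
      refine ⟨fun i => ?_, fun i => ?_, fun i hi => ?_, fun j hj => ?_,
        fun j => ⟨?_, ?_⟩, fun j => ⟨?_, ?_⟩, fun t => ?_, fun j => ?_, ?_, ?_, ?_⟩
      · show AQ i ⬝ᵥ (fun t => a * u₁ S t + b * u₂ S t)
            + BQ i ⬝ᵥ (fun j => a * v₁ S j + b * v₂ S j)
            ≤ dQ i * (a * q₁ S + b * q₂ S)
        rw [dot_combo, dot_combo]
        have h1 := mul_le_mul_of_nonneg_left (c1 i) ha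
        have h2 := mul_le_mul_of_nonneg_left (e1 i) hb
        nlinarith [h1, h2]
      · show AQ i ⬝ᵥ (fun t => a * ub₁ S t + b * ub₂ S t)
            + BQ i ⬝ᵥ (fun j => a * vb₁ S j + b * vb₂ S j)
            ≤ dQ i * (a * qb₁ S + b * qb₂ S)
        rw [dot_combo, dot_combo]
        have h1 := mul_le_mul_of_nonneg_left (c2 i) ha
        have h2 := mul_le_mul_of_nonneg_left (e2 i) hb
        nlinarith [h1, h2]
      · show a * vb₁ S i + b * vb₂ S i = 0
        rw [c3 i hi, e3 i hi]; ring
      · show a * v₁ S j + b * v₂ S j = 0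
        rw [c4 j hj, e4 j hj]; ring
      · exact add_nonneg (mul_nonneg ha (c5 j).1) (mul_nonneg hb (e5 j).1)
      · exact add_le_add (mul_le_mul_of_nonneg_left (c5 j).2 ha)
          (mul_le_mul_of_nonneg_left (e5 j).2 hb)
      · exact add_nonneg (mul_nonneg ha (c6 j).1) (mul_nonneg hb (e6 j).1)
      · exact add_le_add (mul_le_mul_of_nonneg_left (c6 j).2 ha)
          (mul_le_mul_of_nonneg_left (e6 j).2 hb)
      · show a * ub₁ S t + b * ub₂ S t + (a * u₁ S t + b * u₂ S t)
            = a * z₁.1 t + b * z₂.1 t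
        linear_combination a * c7 t + b * e7 t
      · show a * vb₁ S j + b * vb₂ S j + (a * v₁ S j + b * v₂ S j)
            = a * z₁.2 j + b * z₂.2 j
        linear_combination a * c8 j + b * e8 j
      · show a * qb₁ S + b * qb₂ S + (a * q₁ S + b * q₂ S) = 1
        linear_combination a * c9 + b * e9 + hab
      · exact add_nonneg (mul_nonneg ha c10) (mul_nonneg hb e10)
      · exact add_nonneg (mul_nonneg ha c11) (mul_nonneg hb e11)
  · -- projE ⊆ conv((Q ∩ H_T) ∪ (Q ∩ H̄_T))
    rw [hprojE]
    rintro z ⟨q, qb, u, ub, v, vb, H⟩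
    obtain ⟨c1, c2, c3, c4, c5, c6, c7, c8, c9, c10, c11⟩ := H T hT
    by_cases hq0 : q T = 0
    · -- v T = 0, so z ∈ Q ∩ H_T
      apply subset_convexHull
      left
      have hv0 : ∀ j, v T j = 0 := fun j =>
        le_antisymm (by have := (c5 j).2; rwa [hq0] at this) (c5 j).1
      have hqb1 : qb T = 1 := by rw [hq0] at c9; linarith
      constructor
      · rw [hQ]
        constructor
        · intro i
          have hz1 : z.1 = fun t => ub T t + u T t := funext fun t => (c7 t).symm
          have hz2 : z.2 = fun j => vb T j + v T j := funext fun j => (c8 j).symm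
          rw [hz1, hz2]
          have d1 : AQ i ⬝ᵥ (fun t => ub T t + u T t)
              = AQ i ⬝ᵥ ub T + AQ i ⬝ᵥ u T := by
            simpa using dot_combo (AQ i) (ub T) (u T) 1 1
          have d2 : BQ i ⬝ᵥ (fun j => vb T j + v T j)
              = BQ i ⬝ᵥ vb T + BQ i ⬝ᵥ v T := by
            simpa using dot_combo (BQ i) (vb T) (v T) 1 1
          rw [d1, d2]
          have h1 := c1 i; have h2 := c2 i
          rw [hq0] at h1; rw [hqb1] at h2
          linarith
        · intro j
          have := c8 j
          rw [hv0 j] at this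
          have h6 := c6 j
          rw [hqb1] at h6
          constructor <;> linarith [h6.1, h6.2]
      · intro i hi
        have := c8 i
        rw [hv0 i, c3 i hi] at this
        linarith
    · by_cases hqb0 : qb T = 0
      · -- vb T = 0, so z ∈ Q ∩ H̄_T
        apply subset_convexHull
        right
        have hvb0 : ∀ j, vb T j = 0 := fun j =>
          le_antisymm (by have := (c6 j).2; rwa [hqb0] at this) (c6 j).1
        have hq1 : q T = 1 := by rw [hqb0] at c9; linarith
        constructor
        · rw [hQ]
          constructor
          · intro i
            have hz1 : z.1 = fun t => ub T t + u T t := funext fun t => (c7 t).symm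
            have hz2 : z.2 = fun j => vb T j + v T j := funext fun j => (c8 j).symm
            rw [hz1, hz2]
            have d1 : AQ i ⬝ᵥ (fun t => ub T t + u T t)
                = AQ i ⬝ᵥ ub T + AQ i ⬝ᵥ u T := by
              simpa using dot_combo (AQ i) (ub T) (u T) 1 1
            have d2 : BQ i ⬝ᵥ (fun j => vb T j + v T j)
                = BQ i ⬝ᵥ vb T + BQ i ⬝ᵥ v T := by
              simpa using dot_combo (BQ i) (vb T) (v T) 1 1
            rw [d1, d2]
            have h1 := c1 i; have h2 := c2 i
            rw [hq1] at h1; rw [hqb0] at h2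
            linarith
          · intro j
            have := c8 j
            rw [hvb0 j] at this
            have h5 := c5 j
            rw [hq1] at h5
            constructor <;> linarith [h5.1, h5.2]
        · intro j hj
          have := c8 j
          rw [hvb0 j, c4 j hj] at this
          linarith
      · -- both positive: convex combination
        have hq : 0 < q T := lt_of_le_of_ne c10 (Ne.symm hq0)
        have hqb : 0 < qb T := lt_of_le_of_ne c11 (Ne.symm hqb0)
        set wb : (Fin p → ℝ) × (Fin n → ℝ) := ((qb T)⁻¹ • ub T, (qb T)⁻¹ • vb T) with hwb
        set w : (Fin p → ℝ) × (Fin n → ℝ) := ((q T)⁻¹ • u T, (q T)⁻¹ • v T) with hw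
        have hwbmem : wb ∈ (Q ∩ {z | ∀ i ∈ T, z.2 i = 0}) := by
          constructor
          · rw [hQ]
            constructor
            · intro i
              show AQ i ⬝ᵥ ((qb T)⁻¹ • ub T) + BQ i ⬝ᵥ ((qb T)⁻¹ • vb T) ≤ dQ i
              rw [dotProduct_smul, dotProduct_smul, smul_eq_mul, smul_eq_mul, ← mul_add]
              have := mul_le_mul_of_nonneg_left (c2 i) (le_of_lt (inv_pos.2 hqb))
              calc (qb T)⁻¹ * (AQ i ⬝ᵥ ub T + BQ i ⬝ᵥ vb T)
                  ≤ (qb T)⁻¹ * (dQ i * qb T) := this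
                _ = dQ i := by field_simp
            · intro j
              show 0 ≤ (qb T)⁻¹ * vb T j ∧ (qb T)⁻¹ * vb T j ≤ 1
              constructor
              · exact mul_nonneg (le_of_lt (inv_pos.2 hqb)) (c6 j).1
              · have := mul_le_mul_of_nonneg_left (c6 j).2 (le_of_lt (inv_pos.2 hqb))
                rwa [inv_mul_cancel₀ hqb0] at this
          · intro i hi
            show (qb T)⁻¹ * vb T i = 0
            rw [c3 i hi, mul_zero]
        have hwmem : w ∈ (Q ∩ {z | ∀ j : Fin n, (∃ i ∈ T, G.Adj i j) → z.2 j = 0}) := by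
          constructor
          · rw [hQ]
            constructor
            · intro i
              show AQ i ⬝ᵥ ((q T)⁻¹ • u T) + BQ i ⬝ᵥ ((q T)⁻¹ • v T) ≤ dQ i
              rw [dotProduct_smul, dotProduct_smul, smul_eq_mul, smul_eq_mul, ← mul_add]
              have := mul_le_mul_of_nonneg_left (c1 i) (le_of_lt (inv_pos.2 hq))
              calc (q T)⁻¹ * (AQ i ⬝ᵥ u T + BQ i ⬝ᵥ v T)
                  ≤ (q T)⁻¹ * (dQ i * q T) := this
                _ = dQ i := by field_simp
            · intro j
              show 0 ≤ (q T)⁻¹ * v T j ∧ (q T)⁻¹ * v T j ≤ 1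
              constructor
              · exact mul_nonneg (le_of_lt (inv_pos.2 hq)) (c5 j).1
              · have := mul_le_mul_of_nonneg_left (c5 j).2 (le_of_lt (inv_pos.2 hq))
                rwa [inv_mul_cancel₀ hq0] at this
          · intro j hj
            show (q T)⁻¹ * v T j = 0
            rw [c4 j hj, mul_zero]
        have hz : z = qb T • wb + q T • w := by
          refine Prod.ext_iff.2 ⟨?_, ?_⟩
          · funext t
            show z.1 t = qb T * ((qb T)⁻¹ * ub T t) + q T * ((q T)⁻¹ * u T t)
            rw [mul_inv_cancel_left₀ hqb0, mul_inv_cancel_left₀ hq0]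
            exact (c7 t).symm
          · funext j
            show z.2 j = qb T * ((qb T)⁻¹ * vb T j) + q T * ((q T)⁻¹ * v T j)
            rw [mul_inv_cancel_left₀ hqb0, mul_inv_cancel_left₀ hq0]
            exact (c8 j).symm
        rw [hz]
        have hconv : Convex ℝ (convexHull ℝ
            ((Q ∩ {z | ∀ i ∈ T, z.2 i = 0}) ∪
              (Q ∩ {z | ∀ j : Fin n, (∃ i ∈ T, G.Adj i j) → z.2 j = 0}))) :=
          convex_convexHull ℝ _
        exact hconv (subset_convexHull ℝ _ (Or.inl hwbmem))
          (subset_convexHull ℝ _ (Or.inr hwmem)) c11 c10 c9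
end

section
/- Let 𝒯 be a feasible cover partition of the conflict graph G of an LPCC with LP relaxation P and feasible region P^⊥. Define ℛ_𝒯(P) = proj_{x,y} ℰ_𝒯(P) and recursively ℛ_𝒯^t(P) = ℛ_𝒯(ℛ_𝒯^{t−1}(P)). Then for any k ∈ [|𝒯|] and any k distinct elements T₁,…,T_k of 𝒯: conv(P^⊥) ⊆ ℛ_𝒯^k(P) ⊆ conv(⋂_{j=1}^k ((P ∩ H_{T_j}) ∪ (P ∩ H̄_{T_j}))). -/
/-- `H_T`: the coordinate subspace `y_i = 0` for `i ∈ T`. -/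
def HT (p : ℕ) {n : ℕ} (T : Finset (Fin n)) : Set ((Fin p → ℝ) × (Fin n → ℝ)) :=
  {z | ∀ i ∈ T, z.2 i = 0}

/-- `H̄_T`: the coordinate subspace `y_j = 0` for `j ∈ δ(T)`. -/
def HbarT (p : ℕ) {n : ℕ} (G : SimpleGraph (Fin n)) (T : Finset (Fin n)) :
    Set ((Fin p → ℝ) × (Fin n → ℝ)) :=
  {z | ∀ j : Fin n, (∃ i ∈ T, G.Adj i j) → z.2 j = 0}

/-- The relaxation operator `ℛ_𝒯`: `ℛ_𝒯(Q) = proj_{x,y} ℰ_𝒯(Q)`, which by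
Balas' theorem (exactness of the disjunctive formulation for each block, the
blocks being coupled only through `(x,y)`) equals
`⋂_{T ∈ 𝒯} conv((Q ∩ H_T) ∪ (Q ∩ H̄_T))`. -/
def RT (p : ℕ) {n : ℕ} (G : SimpleGraph (Fin n)) (𝒯 : Finset (Finset (Fin n)))
    (Q : Set ((Fin p → ℝ) × (Fin n → ℝ))) : Set ((Fin p → ℝ) × (Fin n → ℝ)) :=
  ⋂ T ∈ 𝒯, convexHull ℝ ((Q ∩ HT p T) ∪ (Q ∩ HbarT p G T))

open Matrix

/-- Key face lemma: intersecting the convex hull of a set with nonnegative `y`-coordinates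
with a coordinate subspace `{y_S = 0}` gives the convex hull of the intersection. -/
lemma face_subset {p n : ℕ} (X : Set ((Fin p → ℝ) × (Fin n → ℝ)))
    (hX : ∀ z ∈ X, ∀ j, 0 ≤ z.2 j) (S : Set (Fin n)) :
    convexHull ℝ X ∩ {z | ∀ i ∈ S, z.2 i = 0} ⊆
      convexHull ℝ (X ∩ {z | ∀ i ∈ S, z.2 i = 0}) := by
  rintro x ⟨hx, hxS⟩
  rw [_root_.convexHull_eq] at hx
  obtain ⟨ι, t, w, z, hw0, hw1, hzX, hcm⟩ := hx
  set t' := {i ∈ t | w i ≠ 0} with ht'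
  have hsub : t' ⊆ t := Finset.filter_subset _ _
  have hcm' : t'.centerMass w z = x := by
    rw [ht', Finset.centerMass_filter_ne_zero]; exact hcm
  have hw1' : ∑ i ∈ t', w i = 1 := by
    rw [ht', Finset.sum_filter_ne_zero]; exact hw1
  have hx_eq : x = ∑ i ∈ t', w i • z i := by
    rw [← hcm', Finset.centerMass_eq_of_sum_1 _ _ hw1']
  have key : ∀ i ∈ t', ∀ s ∈ S, (z i).2 s = 0 := by
    intro i hi s hs
    have hsum : ∑ j ∈ t', w j * (z j).2 s = 0 := by
      have h2 := congrArg (fun v : (Fin p → ℝ) × (Fin n → ℝ) => v.2 s) hx_eq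
      simp only [Prod.snd_sum, Finset.sum_apply, Prod.smul_snd, Pi.smul_apply,
        smul_eq_mul] at h2
      rw [← h2]
      exact hxS s hs
    have hnn : ∀ j ∈ t', 0 ≤ w j * (z j).2 s := fun j hj =>
      mul_nonneg (hw0 j (hsub hj)) (hX _ (hzX j (hsub hj)) s)
    have := (Finset.sum_eq_zero_iff_of_nonneg hnn).1 hsum i hi
    have hwi : w i ≠ 0 := (Finset.mem_filter.1 hi).2
    exact (mul_eq_zero.1 this).resolve_left hwi
  rw [← hcm']
  exact Finset.centerMass_mem_convexHull t' (fun i hi => hw0 i (hsub hi))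
    (by rw [hw1']; norm_num)
    (fun i hi => ⟨hzX i (hsub hi), fun s hs => key i hi s hs⟩)

lemma HT_eq (p : ℕ) {n : ℕ} (T : Finset (Fin n)) :
    HT p T = {z : (Fin p → ℝ) × (Fin n → ℝ) | ∀ i ∈ (↑T : Set (Fin n)), z.2 i = 0} := rfl

lemma HbarT_eq (p : ℕ) {n : ℕ} (G : SimpleGraph (Fin n)) (T : Finset (Fin n)) :
    HbarT p G T = {z : (Fin p → ℝ) × (Fin n → ℝ) |
      ∀ j ∈ {j : Fin n | ∃ i ∈ T, G.Adj i j}, z.2 j = 0} := rfl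

/-- `conv(conv A ∪ conv B) ⊆ conv(A ∪ B)`. -/
lemma convexHull_union_hulls {E : Type*} [AddCommGroup E] [Module ℝ E]
    (A B : Set E) :
    convexHull ℝ (convexHull ℝ A ∪ convexHull ℝ B) ⊆ convexHull ℝ (A ∪ B) := by
  apply convexHull_min _ (convex_convexHull ℝ _)
  exact Set.union_subset
    (convexHull_mono Set.subset_union_left)
    (convexHull_mono Set.subset_union_right)

/-- The right-hand inclusion, by induction on the number of iterations. -/
lemma RT_iter_subset {p n : ℕ} (G : SimpleGraph (Fin n)) (𝒯 : Finset (Finset (Fin n)))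
    (P : Set ((Fin p → ℝ) × (Fin n → ℝ)))
    (hPnn : ∀ z ∈ P, ∀ j : Fin n, 0 ≤ z.2 j) :
    ∀ (k : ℕ) (Ts : Fin (k + 1) → Finset (Fin n)), (∀ j, Ts j ∈ 𝒯) →
      (RT p G 𝒯)^[k + 1] P ⊆
        convexHull ℝ (⋂ j : Fin (k + 1),
          ((P ∩ HT p (Ts j)) ∪ (P ∩ HbarT p G (Ts j)))) := by
  intro k
  induction k with
  | zero =>
    intro Ts hTs
    have h0 : (RT p G 𝒯)^[1] P = RT p G 𝒯 P := congrFun (Function.iterate_one _) P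
    have h1 : (⋂ j : Fin 1, ((P ∩ HT p (Ts j)) ∪ (P ∩ HbarT p G (Ts j))))
        = (P ∩ HT p (Ts 0)) ∪ (P ∩ HbarT p G (Ts 0)) := by
      ext z; simp [Set.mem_iInter, Fin.forall_fin_one]
    rw [h0, h1, RT]
    exact Set.biInter_subset_of_mem (hTs 0)
  | succ k ih =>
    intro Ts hTs
    set SS : Finset (Fin n) → Set ((Fin p → ℝ) × (Fin n → ℝ)) :=
      fun T => (P ∩ HT p T) ∪ (P ∩ HbarT p G T) with hSS
    set Y : Set ((Fin p → ℝ) × (Fin n → ℝ)) :=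
      ⋂ j : Fin (k + 1), SS (Ts j.castSucc) with hY
    have hIH : (RT p G 𝒯)^[k + 1] P ⊆ convexHull ℝ Y :=
      ih (fun j => Ts j.castSucc) (fun j => hTs _)
    have hYP : Y ⊆ P := by
      intro z hz
      have := Set.mem_iInter.1 hz 0
      rcases this with ⟨h, _⟩ | ⟨h, _⟩ <;> exact h
    have hYnn : ∀ z ∈ Y, ∀ j : Fin n, 0 ≤ z.2 j := fun z hz => hPnn z (hYP hz)
    set Tl : Finset (Fin n) := Ts (Fin.last (k + 1)) with hTl
    have hstep : (RT p G 𝒯)^[k + 2] P ⊆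
        convexHull ℝ (((RT p G 𝒯)^[k + 1] P ∩ HT p Tl) ∪
          ((RT p G 𝒯)^[k + 1] P ∩ HbarT p G Tl)) := by
      rw [show k + 2 = (k + 1) + 1 from rfl, Function.iterate_succ_apply', RT]
      exact Set.biInter_subset_of_mem (hTs _)
    have hmono : (((RT p G 𝒯)^[k + 1] P ∩ HT p Tl) ∪
          ((RT p G 𝒯)^[k + 1] P ∩ HbarT p G Tl)) ⊆
        ((convexHull ℝ Y ∩ HT p Tl) ∪ (convexHull ℝ Y ∩ HbarT p G Tl)) :=
      Set.union_subset_union (Set.inter_subset_inter_left _ hIH)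
        (Set.inter_subset_inter_left _ hIH)
    have hface1 : convexHull ℝ Y ∩ HT p Tl ⊆ convexHull ℝ (Y ∩ HT p Tl) := by
      rw [HT_eq]; exact face_subset Y hYnn _
    have hface2 : convexHull ℝ Y ∩ HbarT p G Tl ⊆ convexHull ℝ (Y ∩ HbarT p G Tl) := by
      rw [HbarT_eq]; exact face_subset Y hYnn _
    have hfinal : (Y ∩ HT p Tl) ∪ (Y ∩ HbarT p G Tl) ⊆
        ⋂ j : Fin (k + 2), SS (Ts j) := by
      rintro z (⟨hzY, hzH⟩ | ⟨hzY, hzH⟩) <;>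
      · refine Set.mem_iInter.2 fun j => ?_
        rcases Fin.eq_castSucc_or_eq_last j with ⟨j', rfl⟩ | rfl
        · exact Set.mem_iInter.1 hzY j'
        · first
          | exact Or.inl ⟨hYP hzY, hzH⟩
          | exact Or.inr ⟨hYP hzY, hzH⟩
    calc (RT p G 𝒯)^[k + 2] P
        ⊆ convexHull ℝ (((RT p G 𝒯)^[k + 1] P ∩ HT p Tl) ∪
            ((RT p G 𝒯)^[k + 1] P ∩ HbarT p G Tl)) := hstep
      _ ⊆ convexHull ℝ ((convexHull ℝ Y ∩ HT p Tl) ∪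
            (convexHull ℝ Y ∩ HbarT p G Tl)) := convexHull_mono hmono
      _ ⊆ convexHull ℝ (convexHull ℝ (Y ∩ HT p Tl) ∪
            convexHull ℝ (Y ∩ HbarT p G Tl)) :=
          convexHull_mono (Set.union_subset_union hface1 hface2)
      _ ⊆ convexHull ℝ ((Y ∩ HT p Tl) ∪ (Y ∩ HbarT p G Tl)) :=
          convexHull_union_hulls _ _
      _ ⊆ convexHull ℝ (⋂ j : Fin (k + 2), SS (Ts j)) := convexHull_mono hfinal

/-- Theorem 2: for any `k ∈ [|𝒯|]` and distinct `T₁, …, T_k ∈ 𝒯`,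
`conv(P^⊥) ⊆ ℛ_𝒯^k(P) ⊆ conv(⋂_{j=1}^k ((P ∩ H_{T_j}) ∪ (P ∩ H̄_{T_j})))`. -/
theorem stmt_5 {p n m : ℕ} (G : SimpleGraph (Fin n))
    (A : Fin m → Fin p → ℝ) (B : Fin m → Fin n → ℝ) (d : Fin m → ℝ)
    (𝒯 : Finset (Finset (Fin n)))
    (hdisj : ∀ T₁ ∈ 𝒯, ∀ T₂ ∈ 𝒯, T₁ ≠ T₂ → ∀ i, i ∈ T₁ → i ∉ T₂)
    (hcover : ∀ i j : Fin n, G.Adj i j → (∃ T ∈ 𝒯, i ∈ T) ∨ (∃ T ∈ 𝒯, j ∈ T))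
    (hfeas : ∀ T ∈ 𝒯, ∀ i ∈ T, ∀ j : Fin n, G.Adj i j ↔ ∃ i' ∈ T, G.Adj i' j)
    (P Pperp : Set ((Fin p → ℝ) × (Fin n → ℝ)))
    (hP : P = {z | (∀ i, A i ⬝ᵥ z.1 + B i ⬝ᵥ z.2 ≤ d i) ∧ ∀ j, 0 ≤ z.2 j ∧ z.2 j ≤ 1})
    (hPperp : Pperp = {z ∈ P | ∀ i j : Fin n, G.Adj i j → z.2 i * z.2 j = 0})
    (k : ℕ) (hk1 : 1 ≤ k) (hk2 : k ≤ 𝒯.card)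
    (Ts : Fin k → Finset (Fin n)) (hTinj : Function.Injective Ts)
    (hTs : ∀ j, Ts j ∈ 𝒯) :
    convexHull ℝ Pperp ⊆ (RT p G 𝒯)^[k] P ∧
      (RT p G 𝒯)^[k] P ⊆
        convexHull ℝ (⋂ j : Fin k, ((P ∩ HT p (Ts j)) ∪ (P ∩ HbarT p G (Ts j)))) := by
  have hPnn : ∀ z ∈ P, ∀ j : Fin n, 0 ≤ z.2 j := by
    intro z hz j
    rw [hP] at hz
    exact (hz.2 j).1
  -- Pperp stays inside one application of RT
  have hstep : ∀ Q : Set ((Fin p → ℝ) × (Fin n → ℝ)), Pperp ⊆ Q →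
      Pperp ⊆ RT p G 𝒯 Q := by
    intro Q hQ z hz
    refine Set.mem_iInter₂.2 fun T hT => ?_
    apply subset_convexHull
    by_cases hall : ∀ i ∈ T, z.2 i = 0
    · exact Or.inl ⟨hQ hz, hall⟩
    · push_neg at hall
      obtain ⟨i, hiT, hzi⟩ := hall
      refine Or.inr ⟨hQ hz, fun j hj => ?_⟩
      have hadj : G.Adj i j := (hfeas T hT i hiT j).2 hj
      have hcomp : z.2 i * z.2 j = 0 := by
        rw [hPperp] at hz
        exact hz.2 i j hadj
      exact (mul_eq_zero.1 hcomp).resolve_left hzi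
  have hPperpP : Pperp ⊆ P := by
    rw [hPperp]; intro z hz; exact hz.1
  have hPperp_iter : ∀ j : ℕ, Pperp ⊆ (RT p G 𝒯)^[j] P := by
    intro j
    induction j with
    | zero => exact hPperpP
    | succ j ih =>
      rw [Function.iterate_succ_apply']
      exact hstep _ ih
  obtain ⟨k', rfl⟩ : ∃ k', k = k' + 1 := ⟨k - 1, by omega⟩
  constructor
  · -- RT^[k'+1] P is convex
    have hconv : Convex ℝ ((RT p G 𝒯)^[k' + 1] P) := by
      rw [Function.iterate_succ_apply', RT]
      exact convex_iInter fun T => convex_iInter fun _ => convex_convexHull ℝ _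
    exact convexHull_min (hPperp_iter _) hconv
  · exact RT_iter_subset G 𝒯 P hPnn k' Ts hTs
end

section
/- With the notation of the recursive relaxation theorem, ℛ_𝒯^{|𝒯|}(P) = conv(P^⊥); hence the cover-partition rank r_𝒯(P^⊥), the least r with ℛ_𝒯^r(P) = conv(P^⊥), satisfies r_𝒯(P^⊥) ≤ |𝒯|. -/
open Matrix Set

variable {p n : ℕ}

def Hset (p n : ℕ) (Φ : Fin n → Prop) : Set ((Fin p → ℝ) × (Fin n → ℝ)) :=
  {z | ∀ j, Φ j → z.2 j = 0}

lemma face_lemma (S : Set ((Fin p → ℝ) × (Fin n → ℝ)))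
    (hS : ∀ z ∈ S, ∀ j, 0 ≤ z.2 j) (Φ : Fin n → Prop) :
    convexHull ℝ S ∩ Hset p n Φ ⊆ convexHull ℝ (S ∩ Hset p n Φ) := by
  rintro x ⟨hx, hxH⟩
  rw [convexHull_eq] at hx
  obtain ⟨ι, t, w, z, hw0, hw1, hzS, hxc⟩ := hx
  have hx' : x = ∑ i ∈ t, w i • z i := by
    rw [← hxc, Finset.centerMass_eq_of_sum_1 _ _ hw1]
  have key : ∀ i ∈ t, w i ≠ 0 → z i ∈ Hset p n Φ := by
    intro i hi hwi j hj
    have hsum : ∑ i ∈ t, w i * (z i).2 j = 0 := by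
      have : x.2 j = ∑ i ∈ t, w i * (z i).2 j := by
        rw [hx']; simp [Prod.snd_sum]
      rw [← this, hxH j hj]
    have hnn : ∀ i ∈ t, 0 ≤ w i * (z i).2 j :=
      fun i hi => mul_nonneg (hw0 i hi) (hS _ (hzS i hi) j)
    have := (Finset.sum_eq_zero_iff_of_nonneg hnn).mp hsum i hi
    rcases mul_eq_zero.mp this with h | h
    · exact absurd h hwi
    · exact h
  rw [← hxc, ← Finset.centerMass_filter_ne_zero]
  refine Finset.centerMass_mem_convexHull _ (fun i hi => hw0 i (Finset.mem_filter.mp hi).1) ?_ ?_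
  · have : ∑ i ∈ {i ∈ t | w i ≠ 0}, w i = 1 := by
      rw [← hw1]; exact Finset.sum_filter_ne_zero t
    rw [this]; norm_num
  · intro i hi
    obtain ⟨hit, hwi⟩ := Finset.mem_filter.mp hi
    exact ⟨hzS i hit, key i hit hwi⟩

lemma main_aux (G : SimpleGraph (Fin n)) (𝒯 : Finset (Finset (Fin n)))
    (hcover : ∀ i j : Fin n, G.Adj i j → (∃ T ∈ 𝒯, i ∈ T) ∨ (∃ T ∈ 𝒯, j ∈ T))
    (hfeas : ∀ T ∈ 𝒯, ∀ i ∈ T, ∀ j : Fin n, G.Adj i j ↔ ∃ i' ∈ T, G.Adj i' j)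
    (P Pperp : Set ((Fin p → ℝ) × (Fin n → ℝ)))
    (hPconv : Convex ℝ P) (hPnn : ∀ z ∈ P, ∀ j, 0 ≤ z.2 j)
    (hPperp : Pperp = {z ∈ P | ∀ i j : Fin n, G.Adj i j → z.2 i * z.2 j = 0}) :
    (RT p G 𝒯)^[𝒯.card] P = convexHull ℝ Pperp := by
  classical
  set U : Finset (Fin n) → Set ((Fin p → ℝ) × (Fin n → ℝ)) :=
    fun T => (P ∩ HT p T) ∪ (P ∩ HbarT p G T) with hU
  -- Step A
  have stepA : ∀ T ∈ 𝒯, Pperp ⊆ HT p T ∪ HbarT p G T := by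
    intro T hT z hz
    rw [hPperp] at hz
    obtain ⟨hzP, hze⟩ := hz
    by_cases hall : ∀ i ∈ T, z.2 i = 0
    · exact Or.inl hall
    · push_neg at hall
      obtain ⟨i, hi, hzi⟩ := hall
      refine Or.inr fun j hj => ?_
      have hadj : G.Adj i j := (hfeas T hT i hi j).mpr hj
      have := hze i j hadj
      rcases mul_eq_zero.mp this with h | h
      · exact absurd h hzi
      · exact h
  -- Step B
  have stepB : P ∩ ⋂ T ∈ 𝒯, U T = Pperp := by
    ext z
    constructor
    · rintro ⟨hzP, hzU⟩
      rw [Set.mem_iInter₂] at hzU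
      rw [hPperp]
      refine ⟨hzP, fun i j hadj => ?_⟩
      rcases hcover i j hadj with ⟨T, hT, hiT⟩ | ⟨T, hT, hjT⟩
      · rcases hzU T hT with ⟨_, h⟩ | ⟨_, h⟩
        · rw [h i hiT, zero_mul]
        · rw [h j ⟨i, hiT, hadj⟩, mul_zero]
      · rcases hzU T hT with ⟨_, h⟩ | ⟨_, h⟩
        · rw [h j hjT, mul_zero]
        · rw [h i ⟨j, hjT, hadj.symm⟩, zero_mul]
    · intro hz
      have hzP : z ∈ P := by rw [hPperp] at hz; exact hz.1
      refine ⟨hzP, Set.mem_iInter₂.mpr fun T hT => ?_⟩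
      rcases stepA T hT hz with h | h
      · exact Or.inl ⟨hzP, h⟩
      · exact Or.inr ⟨hzP, h⟩
  have hPperpP : Pperp ⊆ P := by rw [hPperp]; exact fun z hz => hz.1
  -- Step C : lower bound
  have stepC : ∀ k, convexHull ℝ Pperp ⊆ (RT p G 𝒯)^[k] P := by
    intro k
    induction k with
    | zero =>
      simpa using (convexHull_min hPperpP hPconv)
    | succ k ih =>
      rw [Function.iterate_succ_apply']
      refine Set.subset_iInter₂ fun T hT => ?_
      refine convexHull_mono ?_
      intro z hz
      have hzQ : z ∈ (RT p G 𝒯)^[k] P := ih (subset_convexHull ℝ _ hz)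
      rcases stepA T hT hz with h | h
      · exact Or.inl ⟨hzQ, h⟩
      · exact Or.inr ⟨hzQ, h⟩
  -- Step D : upper bound by induction over s ⊆ 𝒯
  have stepD : ∀ s : Finset (Finset (Fin n)), s ⊆ 𝒯 →
      (RT p G 𝒯)^[s.card] P ⊆ convexHull ℝ (P ∩ ⋂ T ∈ s, U T) := by
    intro s
    induction s using Finset.induction_on with
    | empty =>
      intro _
      simpa using subset_convexHull ℝ P
    | @insert a s ha ih =>
      intro hsub
      have ha𝒯 : a ∈ 𝒯 := hsub (Finset.mem_insert_self a s)
      have hs𝒯 : s ⊆ 𝒯 := fun x hx => hsub (Finset.mem_insert_of_mem hx)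
      set Q := (RT p G 𝒯)^[s.card] P with hQ
      set S' := P ∩ ⋂ T ∈ s, U T with hS'
      have hQS : Q ⊆ convexHull ℝ S' := ih hs𝒯
      have hS'P : S' ⊆ P := Set.inter_subset_left
      have hS'nn : ∀ z ∈ S', ∀ j, 0 ≤ z.2 j := fun z hz => hPnn z (hS'P hz)
      rw [Finset.card_insert_of_notMem ha, Function.iterate_succ_apply', ← hQ]
      have h1 : RT p G 𝒯 Q ⊆ convexHull ℝ ((Q ∩ HT p a) ∪ (Q ∩ HbarT p G a)) := by
        intro z hz
        exact Set.mem_iInter₂.mp hz a ha𝒯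
      have hHTa : HT p a = Hset p n (· ∈ a) := rfl
      have hHba : HbarT p G a = Hset p n (fun j => ∃ i ∈ a, G.Adj i j) := rfl
      have h2 : Q ∩ HT p a ⊆ convexHull ℝ (S' ∩ HT p a) := by
        rw [hHTa]
        exact fun z hz => face_lemma S' hS'nn _ ⟨hQS hz.1, hz.2⟩
      have h3 : Q ∩ HbarT p G a ⊆ convexHull ℝ (S' ∩ HbarT p G a) := by
        rw [hHba]
        exact fun z hz => face_lemma S' hS'nn _ ⟨hQS hz.1, hz.2⟩
      have h4 : RT p G 𝒯 Q ⊆ convexHull ℝ ((S' ∩ HT p a) ∪ (S' ∩ HbarT p G a)) := by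
        refine h1.trans ?_
        calc convexHull ℝ ((Q ∩ HT p a) ∪ (Q ∩ HbarT p G a))
            ⊆ convexHull ℝ (convexHull ℝ (S' ∩ HT p a) ∪ convexHull ℝ (S' ∩ HbarT p G a)) :=
              convexHull_mono (Set.union_subset_union h2 h3)
          _ = convexHull ℝ ((S' ∩ HT p a) ∪ (S' ∩ HbarT p G a)) := by
              rw [convexHull_convexHull_union_left, convexHull_convexHull_union_right]
      have h5 : (S' ∩ HT p a) ∪ (S' ∩ HbarT p G a) = P ∩ ⋂ T ∈ insert a s, U T := by
        ext z
        simp only [Set.mem_union, Set.mem_inter_iff, Set.mem_iInter, Finset.mem_insert, hS', hU]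
        constructor
        · rintro (⟨⟨hzP, hzi⟩, h⟩ | ⟨⟨hzP, hzi⟩, h⟩)
          · refine ⟨hzP, fun T hT => ?_⟩
            rcases hT with rfl | hT
            · exact Or.inl ⟨hzP, h⟩
            · exact hzi T hT
          · refine ⟨hzP, fun T hT => ?_⟩
            rcases hT with rfl | hT
            · exact Or.inr ⟨hzP, h⟩
            · exact hzi T hT
        · rintro ⟨hzP, h⟩
          have hai := h a (Or.inl rfl)
          have hsi : ∀ T ∈ s, z ∈ U T := fun T hT => h T (Or.inr hT)
          rcases hai with ⟨_, hH⟩ | ⟨_, hH⟩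
          · exact Or.inl ⟨⟨hzP, fun T hT => hsi T hT⟩, hH⟩
          · exact Or.inr ⟨⟨hzP, fun T hT => hsi T hT⟩, hH⟩
      rw [← h5]
      exact h4
  refine Set.Subset.antisymm ?_ (stepC 𝒯.card)
  have := stepD 𝒯 (le_refl _)
  rwa [stepB] at this


/-- Corollary 1: `ℛ_𝒯^{|𝒯|}(P) = conv(P^⊥)`, hence the cover-partition rank
(the least `r` with `ℛ_𝒯^r(P) = conv(P^⊥)`) is at most `|𝒯|`. -/
theorem stmt_6 {p n m : ℕ} (G : SimpleGraph (Fin n))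
    (A : Fin m → Fin p → ℝ) (B : Fin m → Fin n → ℝ) (d : Fin m → ℝ)
    (𝒯 : Finset (Finset (Fin n)))
    (hdisj : ∀ T₁ ∈ 𝒯, ∀ T₂ ∈ 𝒯, T₁ ≠ T₂ → ∀ i, i ∈ T₁ → i ∉ T₂)
    (hcover : ∀ i j : Fin n, G.Adj i j → (∃ T ∈ 𝒯, i ∈ T) ∨ (∃ T ∈ 𝒯, j ∈ T))
    (hfeas : ∀ T ∈ 𝒯, ∀ i ∈ T, ∀ j : Fin n, G.Adj i j ↔ ∃ i' ∈ T, G.Adj i' j)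
    (P Pperp : Set ((Fin p → ℝ) × (Fin n → ℝ)))
    (hP : P = {z | (∀ i, A i ⬝ᵥ z.1 + B i ⬝ᵥ z.2 ≤ d i) ∧ ∀ j, 0 ≤ z.2 j ∧ z.2 j ≤ 1})
    (hPperp : Pperp = {z ∈ P | ∀ i j : Fin n, G.Adj i j → z.2 i * z.2 j = 0}) :
    (RT p G 𝒯)^[𝒯.card] P = convexHull ℝ Pperp ∧
      sInf {r : ℕ | (RT p G 𝒯)^[r] P = convexHull ℝ Pperp} ≤ 𝒯.card := by
  have hPconv : Convex ℝ P := by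
    rw [hP]
    intro z hz w hw a b ha hb hab
    constructor
    · intro i
      have h1 := hz.1 i
      have h2 := hw.1 i
      have e1 : A i ⬝ᵥ (a • z + b • w).1 + B i ⬝ᵥ (a • z + b • w).2
          = a * (A i ⬝ᵥ z.1 + B i ⬝ᵥ z.2) + b * (A i ⬝ᵥ w.1 + B i ⬝ᵥ w.2) := by
        simp [Prod.fst_add, Prod.snd_add, Prod.smul_fst, Prod.smul_snd, dotProduct_add,
          dotProduct_smul, smul_eq_mul]
        ring
      rw [e1]
      have hd : a * d i + b * d i = d i := by rw [← add_mul, hab, one_mul]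
      linarith [mul_le_mul_of_nonneg_left h1 ha, mul_le_mul_of_nonneg_left h2 hb]
    · intro j
      have h1 := hz.2 j
      have h2 := hw.2 j
      have e2 : (a • z + b • w).2 j = a * z.2 j + b * w.2 j := by
        simp [Prod.snd_add, Prod.smul_snd]
      rw [e2]
      constructor
      · nlinarith [h1.1, h2.1]
      · have : a * 1 + b * 1 = 1 := by rw [mul_one, mul_one, hab]
        linarith [mul_le_mul_of_nonneg_left h1.2 ha, mul_le_mul_of_nonneg_left h2.2 hb]
  have hPnn : ∀ z ∈ P, ∀ j, 0 ≤ z.2 j := by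
    rw [hP]; exact fun z hz j => (hz.2 j).1
  have hmain := main_aux G 𝒯 hcover hfeas P Pperp hPconv hPnn hPperp
  exact ⟨hmain, Nat.sInf_le hmain⟩
end

section
/- Let 𝒯* = {{i} : i is an endpoint of some edge of E} be the feasible cover partition consisting of all singletons of non-isolated vertices, and let ℳ be the edge-based extended relaxation obtained by writing the Balas disjunctive system for each edge e = {i,j} ∈ E separately. Then proj_{x,y} ℰ_{𝒯*}(P) ⊆ proj_{x,y} ℳ. -/
open Matrix

/-- Proposition 1: the projection of the vertex-cover-based extended relaxation
`ℰ_{𝒯*}(P)` for the cover partition `𝒯* = {{i} : i` non-isolated`}` is contained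
in the projection of the edge-based extended relaxation `ℳ`. -/
theorem stmt_7 {p n m : ℕ} (G : SimpleGraph (Fin n))
    (A : Fin m → Fin p → ℝ) (B : Fin m → Fin n → ℝ) (d : Fin m → ℝ) :
    -- proj_{x,y} ℰ_{𝒯*}(P): variables indexed by non-isolated vertices `i`,
    -- with the Balas system for the disjunction `y_i = 0` ∨ `y_{δ(i)} = 0`
    {z : (Fin p → ℝ) × (Fin n → ℝ) |
      ∃ (q qb : Fin n → ℝ) (u ub : Fin n → Fin p → ℝ) (v vb : Fin n → Fin n → ℝ),
        ∀ i : Fin n, (∃ j, G.Adj i j) →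
          (∀ r, A r ⬝ᵥ u i + B r ⬝ᵥ v i ≤ d r * q i) ∧
          (∀ r, A r ⬝ᵥ ub i + B r ⬝ᵥ vb i ≤ d r * qb i) ∧
          vb i i = 0 ∧ (∀ j, G.Adj i j → v i j = 0) ∧
          (∀ j, 0 ≤ v i j ∧ v i j ≤ q i) ∧
          (∀ j, 0 ≤ vb i j ∧ vb i j ≤ qb i) ∧
          (∀ t, ub i t + u i t = z.1 t) ∧
          (∀ j, vb i j + v i j = z.2 j) ∧
          qb i + q i = 1 ∧ 0 ≤ q i ∧ 0 ≤ qb i} ⊆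
    -- proj_{x,y} ℳ: variables indexed by the edges `e = {i,j}` of `G`
    {z : (Fin p → ℝ) × (Fin n → ℝ) |
      ∃ (q qb : Fin n → Fin n → ℝ) (u ub : Fin n → Fin n → Fin p → ℝ)
        (v vb : Fin n → Fin n → Fin n → ℝ),
        ∀ i j : Fin n, G.Adj i j →
          (∀ r, A r ⬝ᵥ u i j + B r ⬝ᵥ v i j ≤ d r * q i j) ∧
          (∀ r, A r ⬝ᵥ ub i j + B r ⬝ᵥ vb i j ≤ d r * qb i j) ∧
          vb i j i = 0 ∧ v i j j = 0 ∧
          (∀ t, 0 ≤ v i j t ∧ v i j t ≤ q i j) ∧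
          (∀ t, 0 ≤ vb i j t ∧ vb i j t ≤ qb i j) ∧
          (∀ t, ub i j t + u i j t = z.1 t) ∧
          (∀ t, vb i j t + v i j t = z.2 t) ∧
          qb i j + q i j = 1 ∧ 0 ≤ q i j ∧ 0 ≤ qb i j} := by
  rintro z ⟨q, qb, u, ub, v, vb, h⟩
  refine ⟨fun i _ => q i, fun i _ => qb i, fun i _ => u i, fun i _ => ub i,
    fun i _ => v i, fun i _ => vb i, fun i j hij => ?_⟩
  obtain ⟨h1, h2, h3, h4, h5, h6, h7, h8, h9, h10, h11⟩ := h i ⟨j, hij⟩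
  exact ⟨h1, h2, h3, h4 j hij, h5, h6, h7, h8, h9, h10, h11⟩
end

section
/- Let G = ([n],E) with feasible cover partition 𝒯, and let 𝒮_𝒯 ⊆ ℝ^{n+2|𝒯|+2|𝒯|n} consist of all (y, q, q̄, v, v̄) with y ∈ [0,1]^n and, for each T ∈ 𝒯: v̄_{T,i} = 0 ∀ i ∈ T, v_{T,j} = 0 ∀ j ∈ δ(T), 0 ≤ v_T ≤ q_T·1, 0 ≤ v̄_T ≤ q̄_T·1, q_T + q̄_T = 1, q_T, q̄_T ≥ 0, v_T = q_T·y, v̄_T = q̄_T·y. Then every extreme point of 𝒮_𝒯 has all coordinates in {0,1}; in particular conv(𝒮_𝒯) is a polytope. -/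
/-- The ambient space of points `(y, q, q̄, v, v̄)`. -/
abbrev Pt (n : ℕ) (𝒯 : Finset (Finset (Fin n))) : Type :=
  (Fin n → ℝ) × ({T // T ∈ 𝒯} → ℝ) × ({T // T ∈ 𝒯} → ℝ) ×
    ({T // T ∈ 𝒯} → Fin n → ℝ) × ({T // T ∈ 𝒯} → Fin n → ℝ)

/-- The bilinear set `𝒮_𝒯`; for `w = (y, q, q̄, v, v̄)` we write `w.1 = y`,
`w.2.1 = q`, `w.2.2.1 = q̄`, `w.2.2.2.1 = v`, `w.2.2.2.2 = v̄`. -/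
def STset {n : ℕ} (G : SimpleGraph (Fin n)) (𝒯 : Finset (Finset (Fin n))) :
    Set (Pt n 𝒯) :=
  {w | (∀ i, 0 ≤ w.1 i ∧ w.1 i ≤ 1) ∧
    ∀ T : {T // T ∈ 𝒯},
      (∀ i ∈ T.1, w.2.2.2.2 T i = 0) ∧
      (∀ j : Fin n, (∃ i ∈ T.1, G.Adj i j) → w.2.2.2.1 T j = 0) ∧
      (∀ j, 0 ≤ w.2.2.2.1 T j ∧ w.2.2.2.1 T j ≤ w.2.1 T) ∧
      (∀ j, 0 ≤ w.2.2.2.2 T j ∧ w.2.2.2.2 T j ≤ w.2.2.1 T) ∧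
      (w.2.1 T + w.2.2.1 T = 1) ∧ 0 ≤ w.2.1 T ∧ 0 ≤ w.2.2.1 T ∧
      (∀ j, w.2.2.2.1 T j = w.2.1 T * w.1 j) ∧
      (∀ j, w.2.2.2.2 T j = w.2.2.1 T * w.1 j)}

/-!
A point of `𝒮_𝒯` is determined by `z = (y, q) ∈ [0,1]^(n + |𝒯|)`, through the map
`z ↦ (y, q, 1 - q, q y, (1 - q) y)`, which is affine in each coordinate of `z` separately.
Besides the box constraints, membership only asks that certain products `q_T y_j` and
`(1 - q_T) y_i` vanish, and rounding a fractional coordinate of `z` to `0` or to `1` keeps these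
products zero. So a point with a fractional coordinate lies in the open segment between its two
roundings and is not extreme, and induction on the number of fractional coordinates writes every
point as a convex combination of the finitely many points with `z ∈ {0,1}^(n + |𝒯|)`.
-/

open Set Function

section RoundingInCube

variable {ι E : Type*} [DecidableEq ι] [AddCommGroup E] [Module ℝ E]

noncomputable def fractionalCoords [Fintype ι] (f : ι → ℝ) : Finset ι :=
  Finset.univ.filter fun i => f i ∈ Ioo 0 1

lemma fractionalCoords_update [Fintype ι] {f : ι → ℝ} (i : ι) {b : ℝ} (hb : b ∉ Ioo 0 1) :
    fractionalCoords (update f i b) = (fractionalCoords f).erase i := by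
  ext j
  by_cases hj : j = i
  · subst hj; simpa [fractionalCoords] using hb
  · simp [fractionalCoords, hj]

def IsAffineInEachCoord (F : (ι → ℝ) → E) : Prop :=
  ∀ f i t, F (update f i t) = (1 - t) • F (update f i 0) + t • F (update f i 1)

def IsRoundingClosed (P : Set (ι → ℝ)) : Prop :=
  ∀ f ∈ P, ∀ i, f i ∈ Ioo 0 1 → update f i 0 ∈ P ∧ update f i 1 ∈ P

lemma update_apply_of_notMem_Ioo {f : ι → ℝ} {i k : ι} (hi : f i ∈ Ioo 0 1)
    (hk : f k ∉ Ioo 0 1) (b : ℝ) : update f i b k = f k :=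
  update_of_ne (by rintro rfl; exact hk hi) _ _

lemma mem_zero_one_of_mem_Icc_of_notMem_Ioo {x : ℝ} (h : x ∈ Icc 0 1) (h' : x ∉ Ioo 0 1) :
    x ∈ ({0, 1} : Set ℝ) := by
  rw [← Icc_sdiff_Ioo_same zero_le_one]
  exact ⟨h, h'⟩

variable {F : (ι → ℝ) → E} {P : Set (ι → ℝ)}

lemma IsAffineInEachCoord.mem_openSegment (hF : IsAffineInEachCoord F) {f : ι → ℝ} {i : ι}
    (hfi : f i ∈ Ioo 0 1) : F f ∈ openSegment ℝ (F (update f i 0)) (F (update f i 1)) :=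
  ⟨1 - f i, f i, sub_pos.2 hfi.2, hfi.1, sub_add_cancel _ _, by rw [← hF, update_eq_self]⟩

theorem IsAffineInEachCoord.image_subset_convexHull [Fintype ι] (hF : IsAffineInEachCoord F)
    (hP : IsRoundingClosed P) (hcube : P ⊆ univ.pi fun _ => Icc 0 1) :
    F '' P ⊆ convexHull ℝ (F '' (P ∩ univ.pi fun _ => {0, 1})) := by
  rintro _ ⟨f, hf, rfl⟩
  induction hN : (fractionalCoords f).card using Nat.strong_induction_on generalizing f with
  | _ N ih =>
  by_cases hfrac : ∃ i, f i ∈ Ioo 0 1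
  · obtain ⟨i, hi⟩ := hfrac
    have hround : ∀ b ∈ ({0, 1} : Set ℝ), F (update f i b) ∈
        convexHull ℝ (F '' (P ∩ univ.pi fun _ => {0, 1})) := by
      rintro b hb
      have hb' : b ∉ Ioo 0 1 := by rcases hb with rfl | rfl <;> simp
      refine ih _ ?_ _ ?_ rfl
      · rw [← hN, fractionalCoords_update i hb']
        exact Finset.card_erase_lt_of_mem (by simpa [fractionalCoords] using hi)
      · rcases hb with rfl | rfl
        exacts [(hP f hf i hi).1, (hP f hf i hi).2]
    exact (convex_convexHull ℝ _).openSegment_subset (hround 0 (by simp)) (hround 1 (by simp))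
      (hF.mem_openSegment hi)
  · refine subset_convexHull ℝ _ ⟨f, ⟨hf, fun i _ => ?_⟩, rfl⟩
    exact mem_zero_one_of_mem_Icc_of_notMem_Ioo (hcube hf i trivial) fun hi => hfrac ⟨i, hi⟩

theorem IsAffineInEachCoord.zero_one_of_mem_extremePoints (hF : IsAffineInEachCoord F)
    (hinj : Injective F) (hP : IsRoundingClosed P) (hcube : P ⊆ univ.pi fun _ => Icc 0 1)
    {f : ι → ℝ} (hf : f ∈ P) (hext : F f ∈ extremePoints ℝ (F '' P)) :
    f ∈ univ.pi fun _ => ({0, 1} : Set ℝ) := by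
  refine fun i _ => mem_zero_one_of_mem_Icc_of_notMem_Ioo (hcube hf i trivial) fun hi => ?_
  have h₀ : F (update f i 0) = F f :=
    hext.2 (mem_image_of_mem F (hP f hf i hi).1) (mem_image_of_mem F (hP f hf i hi).2)
      (hF.mem_openSegment hi)
  have h := congrFun (hinj h₀) i
  rw [update_self] at h
  exact hi.1.ne h

end RoundingInCube

section Encoding

variable {n : ℕ} {G : SimpleGraph (Fin n)} {𝒯 : Finset (Finset (Fin n))}

def toPt (z : Fin n ⊕ {T // T ∈ 𝒯} → ℝ) : Pt n 𝒯 :=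
  (fun i => z (.inl i), fun T => z (.inr T), fun T => 1 - z (.inr T),
    fun T j => z (.inr T) * z (.inl j), fun T j => (1 - z (.inr T)) * z (.inl j))

lemma toPt_injective : Injective (toPt (𝒯 := 𝒯)) := by
  intro z z' h
  funext k
  rcases k with i | T
  exacts [congrFun (congrArg Prod.fst h) i, congrFun (congrArg (·.2.1) h) T]

lemma isAffineInEachCoord_toPt : IsAffineInEachCoord (toPt (𝒯 := 𝒯)) := by
  intro z k t
  simp only [toPt, Prod.ext_iff, funext_iff, Prod.fst_add, Prod.snd_add, Prod.smul_fst,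
    Prod.smul_snd, Pi.add_apply, Pi.smul_apply, smul_eq_mul, update_apply]
  rcases k with ℓ | T₀ <;>
  refine ⟨fun i => ?_, fun T => ?_, fun T => ?_, fun T j => ?_, fun T j => ?_⟩ <;>
    simp only [Sum.inl.injEq, Sum.inr.injEq, reduceCtorEq, if_false] <;> (try split_ifs) <;> ring

lemma STset_subset_range_toPt : STset G 𝒯 ⊆ range toPt := by
  intro w hw
  refine ⟨Sum.elim w.1 w.2.1, ?_⟩
  have hq : ∀ T, 1 - w.2.1 T = w.2.2.1 T := fun T => by linarith [(hw.2 T).2.2.2.2.1]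
  simp only [toPt, Sum.elim_inl, Sum.elim_inr, hq, ← (hw.2 _).2.2.2.2.2.2.2.1,
    ← (hw.2 _).2.2.2.2.2.2.2.2]

lemma toPt_mem_STset_iff {z : Fin n ⊕ {T // T ∈ 𝒯} → ℝ} :
    toPt z ∈ STset G 𝒯 ↔ (∀ k, z k ∈ Icc 0 1) ∧
      (∀ T : {T // T ∈ 𝒯}, ∀ i ∈ T.1, z (.inr T) = 1 ∨ z (.inl i) = 0) ∧
      (∀ T : {T // T ∈ 𝒯}, ∀ j, (∃ i ∈ T.1, G.Adj i j) → z (.inr T) = 0 ∨ z (.inl j) = 0) := by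
  constructor
  · rintro ⟨hy, hT⟩
    refine ⟨?_, fun T i hi => ?_, fun T j hj => ?_⟩
    · rintro (i | T)
      · exact hy i
      · obtain ⟨-, -, -, -, -, hq, hq', -⟩ := hT T
        exact ⟨hq, sub_nonneg.1 hq'⟩
    · exact (mul_eq_zero.1 ((hT T).1 i hi)).imp (fun h => (sub_eq_zero.1 h).symm) id
    · exact mul_eq_zero.1 ((hT T).2.1 j hj)
  · rintro ⟨hcube, hin, hadj⟩
    have hq := fun T => hcube (.inr T)
    refine ⟨fun i => hcube _, fun T => ⟨fun i hi => ?_, fun j hj => ?_, fun j => ?_, fun j => ?_,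
      add_sub_cancel _ _, (hq T).1, sub_nonneg.2 (hq T).2, fun j => rfl, fun j => rfl⟩⟩
    · rcases hin T i hi with h | h <;> simp [toPt, h]
    · rcases hadj T j hj with h | h <;> simp [toPt, h]
    · exact ⟨mul_nonneg (hq T).1 (hcube _).1, mul_le_of_le_one_right (hq T).1 (hcube _).2⟩
    · have := sub_nonneg.2 (hq T).2
      exact ⟨mul_nonneg this (hcube _).1, mul_le_of_le_one_right this (hcube _).2⟩

lemma isRoundingClosed_preimage_STset : IsRoundingClosed (toPt ⁻¹' STset G 𝒯) := by
  intro z hz k hk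
  obtain ⟨hcube, hin, hadj⟩ := toPt_mem_STset_iff.1 hz
  have hkeep : ∀ b m {c : ℝ}, c ∉ Ioo 0 1 → z m = c → update z k b m = c :=
    fun b m c hc hm => (update_apply_of_notMem_Ioo hk (hm ▸ hc) b).trans hm
  have hround : ∀ b ∈ ({0, 1} : Set ℝ), toPt (update z k b) ∈ STset G 𝒯 := by
    intro b hb
    refine toPt_mem_STset_iff.2 ⟨fun m => ?_, fun T i hi => ?_, fun T j hj => ?_⟩
    · by_cases hm : m = k
      · subst hm
        rw [update_self]
        rcases hb with rfl | rfl <;> simp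
      · rw [update_of_ne hm]
        exact hcube m
    · exact (hin T i hi).imp (hkeep b _ (by simp)) (hkeep b _ (by simp))
    · exact (hadj T j hj).imp (hkeep b _ (by simp)) (hkeep b _ (by simp))
  exact ⟨hround 0 (by simp), hround 1 (by simp)⟩

end Encoding

theorem stmt_10_general {n : ℕ} (G : SimpleGraph (Fin n)) (𝒯 : Finset (Finset (Fin n))) :
    (∀ w ∈ Set.extremePoints ℝ (STset G 𝒯),
      (∀ i, w.1 i = 0 ∨ w.1 i = 1) ∧
      (∀ T, w.2.1 T = 0 ∨ w.2.1 T = 1) ∧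
      (∀ T, w.2.2.1 T = 0 ∨ w.2.2.1 T = 1) ∧
      (∀ T j, w.2.2.2.1 T j = 0 ∨ w.2.2.2.1 T j = 1) ∧
      (∀ T j, w.2.2.2.2 T j = 0 ∨ w.2.2.2.2 T j = 1)) ∧
    ∃ F : Set (Pt n 𝒯), F.Finite ∧ convexHull ℝ (STset G 𝒯) = convexHull ℝ F := by
  set P := toPt ⁻¹' STset G 𝒯
  have hS : toPt '' P = STset G 𝒯 := image_preimage_eq_of_subset STset_subset_range_toPt
  have hP : IsRoundingClosed P := isRoundingClosed_preimage_STset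
  have hcube : P ⊆ univ.pi fun _ => Icc 0 1 := fun z hz k _ => (toPt_mem_STset_iff.1 hz).1 k
  refine ⟨fun w hw => ?_, toPt '' (P ∩ univ.pi fun _ => {0, 1}), ?_, ?_⟩
  · rw [← hS] at hw
    obtain ⟨z, hz, rfl⟩ := hw.1
    have h01 : ∀ k, IsIdempotentElem (z k) := fun k => IsIdempotentElem.iff_eq_zero_or_one.2 <|
      isAffineInEachCoord_toPt.zero_one_of_mem_extremePoints toPt_injective hP hcube hz hw k trivial
    simp only [← IsIdempotentElem.iff_eq_zero_or_one]
    exact ⟨fun i => h01 _, fun T => h01 _, fun T => (h01 _).one_sub,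
      fun T j => (h01 _).mul (h01 _), fun T j => (h01 _).one_sub.mul (h01 _)⟩
  · exact ((Finite.pi fun _ => toFinite _).subset inter_subset_right).image _
  · rw [← hS]
    exact (convexHull_min (isAffineInEachCoord_toPt.image_subset_convexHull hP hcube)
      (convex_convexHull ℝ _)).antisymm (convexHull_mono (image_mono inter_subset_left))

/-- Proposition 4: every extreme point of `𝒮_𝒯` has all coordinates in `{0,1}`;
in particular `conv(𝒮_𝒯)` is a polytope. -/
theorem stmt_10 {n : ℕ} (G : SimpleGraph (Fin n)) (𝒯 : Finset (Finset (Fin n)))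
    (hdisj : ∀ T₁ ∈ 𝒯, ∀ T₂ ∈ 𝒯, T₁ ≠ T₂ → ∀ i, i ∈ T₁ → i ∉ T₂)
    (hcover : ∀ i j : Fin n, G.Adj i j → (∃ T ∈ 𝒯, i ∈ T) ∨ (∃ T ∈ 𝒯, j ∈ T))
    (hfeas : ∀ T ∈ 𝒯, ∀ i ∈ T, ∀ j : Fin n, G.Adj i j ↔ ∃ i' ∈ T, G.Adj i' j) :
    (∀ w ∈ Set.extremePoints ℝ (STset G 𝒯),
      (∀ i, w.1 i = 0 ∨ w.1 i = 1) ∧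
      (∀ T, w.2.1 T = 0 ∨ w.2.1 T = 1) ∧
      (∀ T, w.2.2.1 T = 0 ∨ w.2.2.1 T = 1) ∧
      (∀ T j, w.2.2.2.1 T j = 0 ∨ w.2.2.2.1 T j = 1) ∧
      (∀ T j, w.2.2.2.2 T j = 0 ∨ w.2.2.2.2 T j = 1)) ∧
    ∃ F : Set (Pt n 𝒯), F.Finite ∧ convexHull ℝ (STset G 𝒯) = convexHull ℝ F :=
  stmt_10_general G 𝒯
end

section
/- Let BQP_{2|𝒯|,n} = conv({(y,q,q̄,v,v̄) ∈ {0,1}^{n+2|𝒯|+2|𝒯|n} : v_T = q_T·y and v̄_T = q̄_T·y for all T ∈ 𝒯}) be the boolean quadric polytope of the complete bipartite graph K_{2|𝒯|,n}. Then {(y,q,q̄,v,v̄) ∈ BQP_{2|𝒯|,n} : for all T ∈ 𝒯, v̄_{T,i} = 0 ∀ i ∈ T, v_{T,j} = 0 ∀ j ∈ δ(T), q_T + q̄_T = 1, v_T + v̄_T = y} = conv(𝒮_𝒯). -/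
/-- The boolean quadric polytope of the complete bipartite graph `K_{2|𝒯|, n}`:
the convex hull of the binary points with `v_T = q_T·y` and `v̄_T = q̄_T·y`. -/
def BQP {n : ℕ} (𝒯 : Finset (Finset (Fin n))) : Set (Pt n 𝒯) :=
  convexHull ℝ
    {w | (∀ i, w.1 i = 0 ∨ w.1 i = 1) ∧
      (∀ T, w.2.1 T = 0 ∨ w.2.1 T = 1) ∧
      (∀ T, w.2.2.1 T = 0 ∨ w.2.2.1 T = 1) ∧
      (∀ T j, w.2.2.2.1 T j = w.2.1 T * w.1 j) ∧
      (∀ T j, w.2.2.2.2 T j = w.2.2.1 T * w.1 j)}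

/-!
A point of `𝒮_𝒯` is `liftPt y q = (y, q, 1 - q, q·y, (1 - q)·y)` with `y`, `q` in unit cubes.
Since `liftPt` is affine in each argument separately and a cube is the hull of its vertices,
`𝒮_𝒯 ⊆ BQP`. Conversely, the affine map `flipPt`, which replaces `q̄` by `1 - q` and `v̄` by
`y - v`, fixes every point with `q + q̄ = 1` and `v + v̄ = y` and sends each binary point of `BQP`
to the lift of a binary pair; hence such a point is a convex combination of binary lifts. The
coordinates `v̄_{T,i}` and `v_{T,j}` are nonnegative on all lifts, so where they vanish at the
point they vanish at every lift used, and these lifts lie in `𝒮_𝒯`.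
-/

open Set

section Convexity

variable {𝕜 E F : Type*} [Semiring 𝕜] [PartialOrder 𝕜] [AddCommMonoid E] [Module 𝕜 E]
  [AddCommMonoid F] [Module 𝕜 F]

theorem Set.MapsTo.convexHull_of_map_combo {f : E → F} {s : Set E} {t : Set F}
    (hf : ∀ x y (a b : 𝕜), a + b = 1 → f (a • x + b • y) = a • f x + b • f y)
    (ht : Convex 𝕜 t) (hst : MapsTo f s t) : MapsTo f (convexHull 𝕜 s) t :=
  fun _ hx => convexHull_min hst (fun _ hx _ hy a b ha hb hab => by
    show f _ ∈ t
    rw [hf _ _ a b hab]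
    exact ht hx hy ha hb hab) hx

end Convexity

theorem mem_convexHull_sep_of_map_eq_zero {𝕜 E ι : Type*} [Field 𝕜] [LinearOrder 𝕜]
    [IsStrictOrderedRing 𝕜] [AddCommGroup E] [Module 𝕜 E] {s : Set E} {x : E}
    (hx : x ∈ convexHull 𝕜 s) (ℓ : ι → E →ₗ[𝕜] 𝕜) (hs : ∀ k, ∀ z ∈ s, 0 ≤ ℓ k z)
    (hx₀ : ∀ k, ℓ k x = 0) : x ∈ convexHull 𝕜 {z ∈ s | ∀ k, ℓ k z = 0} := by
  classical
  obtain ⟨ι', _, w, z, hw₀, hw₁, hz, rfl⟩ := mem_convexHull_iff_exists_fintype.mp hx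
  have hface : ∀ i, w i ≠ 0 → ∀ k, ℓ k (z i) = 0 := by
    intro i hi k
    have hsum : ∑ j, w j * ℓ k (z j) = 0 := by simpa using hx₀ k
    have := (Finset.sum_eq_zero_iff_of_nonneg fun j _ =>
      mul_nonneg (hw₀ j) (hs k _ (hz j))).mp hsum i (Finset.mem_univ i)
    exact (mul_eq_zero.mp this).resolve_left hi
  rw [← Finset.sum_filter_of_ne fun i _ h => left_ne_zero_of_smul h]
  exact (convex_convexHull 𝕜 _).sum_mem (fun i _ => hw₀ i)
    (by rwa [Finset.sum_filter_ne_zero])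
    fun i hi => subset_convexHull 𝕜 _ ⟨hz i, hface i (Finset.mem_filter.mp hi).2⟩

theorem convexHull_univ_pi_zero_one (ι : Type*) [Finite ι] :
    convexHull ℝ (univ.pi fun _ : ι => ({0, 1} : Set ℝ)) = univ.pi fun _ => Icc 0 1 := by
  rw [convexHull_pi]
  simp only [convexHull_pair, segment_eq_Icc zero_le_one]

theorem univ_pi_zero_one_subset (ι : Type*) :
    (univ.pi fun _ : ι => ({0, 1} : Set ℝ)) ⊆ univ.pi fun _ => Icc 0 1 :=
  pi_mono fun _ _ => by rintro x (rfl | rfl) <;> simp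

section Lifts

variable {n : ℕ} {𝒯 : Finset (Finset (Fin n))}

def liftPt (y : Fin n → ℝ) (q : {T // T ∈ 𝒯} → ℝ) : Pt n 𝒯 :=
  (y, q, 1 - q, fun T j => q T * y j, fun T j => (1 - q T) * y j)

def flipPt (w : Pt n 𝒯) : Pt n 𝒯 :=
  (w.1, w.2.1, 1 - w.2.1, w.2.2.2.1, fun T j => w.1 j - w.2.2.2.1 T j)

def bqpVertices (𝒯 : Finset (Finset (Fin n))) : Set (Pt n 𝒯) :=
  {w | (∀ i, w.1 i = 0 ∨ w.1 i = 1) ∧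
      (∀ T, w.2.1 T = 0 ∨ w.2.1 T = 1) ∧
      (∀ T, w.2.2.1 T = 0 ∨ w.2.2.1 T = 1) ∧
      (∀ T j, w.2.2.2.1 T j = w.2.1 T * w.1 j) ∧
      (∀ T j, w.2.2.2.2 T j = w.2.2.1 T * w.1 j)}

theorem liftPt_combo_left (q : {T // T ∈ 𝒯} → ℝ) (y y' : Fin n → ℝ) (a b : ℝ) (hab : a + b = 1) :
    liftPt (a • y + b • y') q = a • liftPt y q + b • liftPt y' q := by
  obtain rfl : b = 1 - a := by linarith
  ext <;> simp [liftPt] <;> ring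

theorem liftPt_combo_right (y : Fin n → ℝ) (q q' : {T // T ∈ 𝒯} → ℝ) (a b : ℝ) (hab : a + b = 1) :
    liftPt y (a • q + b • q') = a • liftPt y q + b • liftPt y q' := by
  obtain rfl : b = 1 - a := by linarith
  ext <;> simp [liftPt] <;> ring

theorem flipPt_combo (w w' : Pt n 𝒯) (a b : ℝ) (hab : a + b = 1) :
    flipPt (a • w + b • w') = a • flipPt w + b • flipPt w' := by
  obtain rfl : b = 1 - a := by linarith
  ext <;> simp [flipPt] <;> ring

theorem liftPt_mem_bqpVertices {y : Fin n → ℝ} {q : {T // T ∈ 𝒯} → ℝ}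
    (hy : y ∈ univ.pi fun _ => {0, 1}) (hq : q ∈ univ.pi fun _ => {0, 1}) :
    liftPt y q ∈ bqpVertices 𝒯 := by
  simp only [mem_univ_pi, mem_insert_iff, mem_singleton_iff] at hy hq
  refine ⟨hy, hq, fun T => ?_, fun _ _ => rfl, fun _ _ => rfl⟩
  rcases hq T with h | h <;> simp [liftPt, h]

theorem flipPt_eq_liftPt {w : Pt n 𝒯} (hw : w ∈ bqpVertices 𝒯) : flipPt w = liftPt w.1 w.2.1 := by
  obtain ⟨-, -, -, hv, -⟩ := hw
  ext <;> simp [flipPt, liftPt, hv, sub_mul]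

theorem liftPt_mem_BQP {y : Fin n → ℝ} {q : {T // T ∈ 𝒯} → ℝ}
    (hy : y ∈ univ.pi fun _ => Icc 0 1) (hq : q ∈ univ.pi fun _ => Icc 0 1) :
    liftPt y q ∈ BQP 𝒯 := by
  rw [← convexHull_univ_pi_zero_one] at hy hq
  have hvert : ∀ q ∈ univ.pi fun _ => ({0, 1} : Set ℝ), liftPt y q ∈ BQP 𝒯 := fun q hq =>
    MapsTo.convexHull_of_map_combo (liftPt_combo_left q) (convex_convexHull ℝ _)
      (fun y hy => subset_convexHull ℝ _ (liftPt_mem_bqpVertices hy hq)) hy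
  exact MapsTo.convexHull_of_map_combo (liftPt_combo_right y) (convex_convexHull ℝ _) hvert hq

def constraintSet (G : SimpleGraph (Fin n)) (𝒯 : Finset (Finset (Fin n))) : Set (Pt n 𝒯) :=
  {w | ∀ T : {T // T ∈ 𝒯},
    (∀ i ∈ T.1, w.2.2.2.2 T i = 0) ∧
    (∀ j : Fin n, (∃ i ∈ T.1, G.Adj i j) → w.2.2.2.1 T j = 0) ∧
    (w.2.1 T + w.2.2.1 T = 1) ∧
    (∀ j, w.2.2.2.1 T j + w.2.2.2.2 T j = w.1 j)}

variable {G : SimpleGraph (Fin n)}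

theorem convex_constraintSet : Convex ℝ (constraintSet G 𝒯) := by
  intro w hw w' hw' a b _ _ hab
  refine fun T => ⟨fun i hi => ?_, fun j hj => ?_, ?_, fun j => ?_⟩
  · simp [(hw T).1 i hi, (hw' T).1 i hi]
  · simp [(hw T).2.1 j hj, (hw' T).2.1 j hj]
  · show a * w.2.1 T + b * w'.2.1 T + (a * w.2.2.1 T + b * w'.2.2.1 T) = 1
    linear_combination a * (hw T).2.2.1 + b * (hw' T).2.2.1 + hab
  · show a * w.2.2.2.1 T j + b * w'.2.2.2.1 T j + (a * w.2.2.2.2 T j + b * w'.2.2.2.2 T j) =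
      a * w.1 j + b * w'.1 j
    linear_combination a * (hw T).2.2.2 j + b * (hw' T).2.2.2 j

theorem flipPt_eq_self {w : Pt n 𝒯} (hw : w ∈ constraintSet G 𝒯) : flipPt w = w := by
  ext T j <;> simp only [flipPt, Pi.sub_apply, Pi.one_apply]
  · linarith [(hw T).2.2.1]
  · linarith [(hw T).2.2.2 j]

theorem STset_subset_constraintSet : STset G 𝒯 ⊆ constraintSet G 𝒯 := by
  rintro w ⟨-, hT⟩ T
  obtain ⟨hvbar, hv, -, -, hq, -, -, hvq, hvbarq⟩ := hT T
  exact ⟨hvbar, hv, hq, fun j => by rw [hvq, hvbarq, ← add_mul, hq, one_mul]⟩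

theorem STset_subset_BQP : STset G 𝒯 ⊆ BQP 𝒯 := by
  rintro w ⟨hy, hT⟩
  choose _ _ _ _ hsum hq hqbar hv hvbar using hT
  have hlift : liftPt w.1 w.2.1 = w := by
    ext T j <;> simp only [liftPt, Pi.sub_apply, Pi.one_apply]
    · linarith [hsum T]
    · exact (hv T j).symm
    · rw [hvbar T j, ← hsum T]
      ring
  rw [← hlift]
  exact liftPt_mem_BQP (fun i _ => hy i) fun T _ => ⟨hq T, by linarith [hsum T, hqbar T]⟩

theorem liftPt_nonneg {y : Fin n → ℝ} {q : {T // T ∈ 𝒯} → ℝ}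
    (hy : y ∈ univ.pi fun _ => Icc 0 1) (hq : q ∈ univ.pi fun _ => Icc 0 1) (T : {T // T ∈ 𝒯})
    (j : Fin n) : 0 ≤ (liftPt y q).2.2.2.1 T j ∧ 0 ≤ (liftPt y q).2.2.2.2 T j :=
  ⟨mul_nonneg (hq T trivial).1 (hy j trivial).1,
    mul_nonneg (sub_nonneg.mpr (hq T trivial).2) (hy j trivial).1⟩

theorem liftPt_mem_STset {y : Fin n → ℝ} {q : {T // T ∈ 𝒯} → ℝ}
    (hy : y ∈ univ.pi fun _ => Icc 0 1) (hq : q ∈ univ.pi fun _ => Icc 0 1)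
    (hvbar : ∀ T : {T // T ∈ 𝒯}, ∀ i ∈ T.1, (1 - q T) * y i = 0)
    (hv : ∀ T : {T // T ∈ 𝒯}, ∀ j, (∃ i ∈ T.1, G.Adj i j) → q T * y j = 0) :
    liftPt y q ∈ STset G 𝒯 := by
  have hpos := liftPt_nonneg hy hq
  simp only [mem_univ_pi, mem_Icc] at hy hq
  refine ⟨hy, fun T => ⟨hvbar T, hv T, fun j => ⟨(hpos T j).1, ?_⟩, fun j => ⟨(hpos T j).2, ?_⟩,
    add_sub_cancel _ _, (hq T).1, sub_nonneg.mpr (hq T).2, fun _ => rfl, fun _ => rfl⟩⟩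
  · exact mul_le_of_le_one_right (hq T).1 (hy j).2
  · exact mul_le_of_le_one_right (sub_nonneg.mpr (hq T).2) (hy j).2

theorem mem_convexHull_STset_of_mem_constraintSet {x : Pt n 𝒯} (hxB : x ∈ BQP 𝒯)
    (hxC : x ∈ constraintSet G 𝒯) : x ∈ convexHull ℝ (STset G 𝒯) := by
  set V : Set (Pt n 𝒯) := image2 liftPt (univ.pi fun _ => Icc 0 1) (univ.pi fun _ => Icc 0 1)
  have hxV : x ∈ convexHull ℝ V := by
    rw [← flipPt_eq_self hxC]
    refine MapsTo.convexHull_of_map_combo flipPt_combo (convex_convexHull ℝ _) (fun z hz => ?_) hxB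
    exact subset_convexHull ℝ _ ⟨z.1, univ_pi_zero_one_subset _ fun i _ => hz.1 i,
      z.2.1, univ_pi_zero_one_subset _ fun T _ => hz.2.1 T, (flipPt_eq_liftPt hz).symm⟩
  have hxV' := mem_convexHull_sep_of_map_eq_zero hxV
    (fun k : Σ T : {T // T ∈ 𝒯}, {i // i ∈ T.1} =>
      IsLinearMap.mk' (fun w : Pt n 𝒯 => w.2.2.2.2 k.1 k.2) ⟨fun _ _ => rfl, fun _ _ => rfl⟩)
    (by
      rintro k _ ⟨y, hy, q, hq, rfl⟩
      exact (liftPt_nonneg hy hq k.1 k.2).2)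
    fun k => (hxC k.1).1 k.2 k.2.2
  have hxV'' := mem_convexHull_sep_of_map_eq_zero hxV'
    (fun k : Σ T : {T // T ∈ 𝒯}, {j // ∃ i ∈ T.1, G.Adj i j} =>
      IsLinearMap.mk' (fun w : Pt n 𝒯 => w.2.2.2.1 k.1 k.2) ⟨fun _ _ => rfl, fun _ _ => rfl⟩)
    (by
      rintro k _ ⟨⟨y, hy, q, hq, rfl⟩, -⟩
      exact (liftPt_nonneg hy hq k.1 k.2).1)
    fun k => (hxC k.1).2.1 k.2 k.2.2
  refine convexHull_mono ?_ hxV''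
  rintro _ ⟨⟨⟨y, hy, q, hq, rfl⟩, hvbar⟩, hv⟩
  exact liftPt_mem_STset hy hq (fun T i hi => hvbar ⟨T, i, hi⟩) fun T j hj => hv ⟨T, j, hj⟩

end Lifts

theorem stmt_11_general {n : ℕ} (G : SimpleGraph (Fin n)) (𝒯 : Finset (Finset (Fin n))) :
    {w ∈ BQP 𝒯 |
      ∀ T : {T // T ∈ 𝒯},
        (∀ i ∈ T.1, w.2.2.2.2 T i = 0) ∧
        (∀ j : Fin n, (∃ i ∈ T.1, G.Adj i j) → w.2.2.2.1 T j = 0) ∧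
        (w.2.1 T + w.2.2.1 T = 1) ∧
        (∀ j, w.2.2.2.1 T j + w.2.2.2.2 T j = w.1 j)}
      = convexHull ℝ (STset G 𝒯) := by
  refine Subset.antisymm (fun x hx => mem_convexHull_STset_of_mem_constraintSet hx.1 hx.2) ?_
  exact convexHull_min (fun w hw => ⟨STset_subset_BQP hw, STset_subset_constraintSet hw⟩)
    ((convex_convexHull ℝ _).inter convex_constraintSet)

/-- Theorem 4: intersecting `BQP_{2|𝒯|,n}` with the constraints
`v̄_{T,i} = 0 (i ∈ T)`, `v_{T,j} = 0 (j ∈ δ(T))`, `q_T + q̄_T = 1`, and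
`v_T + v̄_T = y` yields exactly `conv(𝒮_𝒯)`. -/
theorem stmt_11 {n : ℕ} (G : SimpleGraph (Fin n)) (𝒯 : Finset (Finset (Fin n)))
    (hdisj : ∀ T₁ ∈ 𝒯, ∀ T₂ ∈ 𝒯, T₁ ≠ T₂ → ∀ i, i ∈ T₁ → i ∉ T₂)
    (hcover : ∀ i j : Fin n, G.Adj i j → (∃ T ∈ 𝒯, i ∈ T) ∨ (∃ T ∈ 𝒯, j ∈ T))
    (hfeas : ∀ T ∈ 𝒯, ∀ i ∈ T, ∀ j : Fin n, G.Adj i j ↔ ∃ i' ∈ T, G.Adj i' j) :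
    {w ∈ BQP 𝒯 |
      ∀ T : {T // T ∈ 𝒯},
        (∀ i ∈ T.1, w.2.2.2.2 T i = 0) ∧
        (∀ j : Fin n, (∃ i ∈ T.1, G.Adj i j) → w.2.2.2.1 T j = 0) ∧
        (w.2.1 T + w.2.2.1 T = 1) ∧
        (∀ j, w.2.2.2.1 T j + w.2.2.2.2 T j = w.1 j)}
      = convexHull ℝ (STset G 𝒯) :=
  stmt_11_general G 𝒯
end

section
/- Let 𝒯 be a feasible cover partition of G. Then the projection of conv(𝒮_𝒯) onto the y-coordinates is contained in the stable set polytope of G, i.e., proj_y conv(𝒮_𝒯) ⊆ conv({y ∈ {0,1}^n : y_i + y_j ≤ 1 ∀ {i,j} ∈ E}). -/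
/-- A `[0,1]`-vector whose support is stable lies in the convex hull of binary
stable vectors. -/
lemma frac_mem_hull {n : ℕ} (G : SimpleGraph (Fin n)) (y : Fin n → ℝ)
    (h01 : ∀ i, 0 ≤ y i ∧ y i ≤ 1)
    (hst : ∀ i j : Fin n, G.Adj i j → y i = 0 ∨ y j = 0) :
    y ∈ convexHull ℝ
      {y : Fin n → ℝ | (∀ i, y i = 0 ∨ y i = 1) ∧
        ∀ i j : Fin n, G.Adj i j → y i + y j ≤ 1} := by
  set t : Fin n → Set ℝ := fun i => if y i = 0 then {0} else {0, 1} with ht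
  have hsub : Set.univ.pi t ⊆
      {y : Fin n → ℝ | (∀ i, y i = 0 ∨ y i = 1) ∧
        ∀ i j : Fin n, G.Adj i j → y i + y j ≤ 1} := by
    intro z hz
    have hbin : ∀ i, z i = 0 ∨ z i = 1 := by
      intro i
      have := hz i (Set.mem_univ i)
      by_cases h : y i = 0 <;> simp [ht, h] at this <;> tauto
    refine ⟨hbin, fun i j hij => ?_⟩
    have hzi : z i ≤ 1 := by rcases hbin i with h | h <;> simp [h]
    have hzj : z j ≤ 1 := by rcases hbin j with h | h <;> simp [h]
    rcases hst i j hij with h | h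
    · have := hz i (Set.mem_univ i); simp [ht, h] at this; linarith
    · have := hz j (Set.mem_univ j); simp [ht, h] at this; linarith
  refine convexHull_mono hsub ?_
  apply mem_convexHull_pi
  intro i _
  by_cases h : y i = 0
  · simp [ht, h]
  · have : t i = ({0, 1} : Set ℝ) := by simp [ht, h]
    rw [this, convexHull_pair, segment_eq_Icc (by norm_num : (0:ℝ) ≤ 1)]
    exact ⟨(h01 i).1, (h01 i).2⟩

/-- Proposition 5: the projection of `conv(𝒮_𝒯)` onto the `y`-coordinates is
contained in the stable set polytope of `G`. -/
theorem stmt_13 {n : ℕ} (G : SimpleGraph (Fin n)) (𝒯 : Finset (Finset (Fin n)))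
    (hdisj : ∀ T₁ ∈ 𝒯, ∀ T₂ ∈ 𝒯, T₁ ≠ T₂ → ∀ i, i ∈ T₁ → i ∉ T₂)
    (hcover : ∀ i j : Fin n, G.Adj i j → (∃ T ∈ 𝒯, i ∈ T) ∨ (∃ T ∈ 𝒯, j ∈ T))
    (hfeas : ∀ T ∈ 𝒯, ∀ i ∈ T, ∀ j : Fin n, G.Adj i j ↔ ∃ i' ∈ T, G.Adj i' j) :
    ∀ w ∈ convexHull ℝ (STset G 𝒯),
      w.1 ∈ convexHull ℝ
        {y : Fin n → ℝ | (∀ i, y i = 0 ∨ y i = 1) ∧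
          ∀ i j : Fin n, G.Adj i j → y i + y j ≤ 1} := by
  intro w hw
  -- projection is linear
  let f : Pt n 𝒯 →ₗ[ℝ] (Fin n → ℝ) := LinearMap.fst ℝ _ _
  have himg : w.1 ∈ convexHull ℝ (f '' STset G 𝒯) := by
    rw [← f.image_convexHull]
    exact ⟨w, hw, rfl⟩
  refine convexHull_min ?_ (convex_convexHull ℝ _) himg
  rintro y ⟨u, hu, rfl⟩
  obtain ⟨h01, hT⟩ := hu
  -- key: for each edge, one endpoint of y = u.1 vanishes
  have key : ∀ i j : Fin n, G.Adj i j → u.1 i = 0 ∨ u.1 j = 0 := by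
    have main : ∀ i j : Fin n, G.Adj i j → (∃ T ∈ 𝒯, i ∈ T) →
        u.1 i = 0 ∨ u.1 j = 0 := by
      rintro i j hij ⟨T, hTmem, hiT⟩
      obtain ⟨hvb, hv0, _, _, hsum, hq0, hqb0, hv, hvbar⟩ := hT ⟨T, hTmem⟩
      have h1 : u.2.2.1 ⟨T, hTmem⟩ * u.1 i = 0 := by
        rw [← hvbar]; exact hvb i hiT
      have h2 : u.2.1 ⟨T, hTmem⟩ * u.1 j = 0 := by
        rw [← hv]; exact hv0 j ⟨i, hiT, hij⟩
      by_cases hq : u.2.1 ⟨T, hTmem⟩ = 0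
      · have : u.2.2.1 ⟨T, hTmem⟩ = 1 := by linarith
        left; rw [this, one_mul] at h1; exact h1
      · right; exact (mul_eq_zero.mp h2).resolve_left hq
    intro i j hij
    rcases hcover i j hij with h | h
    · exact main i j hij h
    · exact (main j i hij.symm h).symm
  exact frac_mem_hull G u.1 h01 key
end

section
/- If αᵀy ≤ β is a valid inequality for the stable set polytope of G and 𝒯 is a feasible cover partition of G, then for every T ∈ 𝒯, both αᵀv_T ≤ β·q_T and αᵀv̄_T ≤ β·q̄_T are valid inequalities for conv(𝒮_𝒯). -/
open Matrix

lemma mem_hull_of_stable_support {n : ℕ} (G : SimpleGraph (Fin n)) :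
    ∀ k : ℕ, ∀ y : Fin n → ℝ,
      (Finset.univ.filter (fun i => y i ≠ 0 ∧ y i ≠ 1)).card ≤ k →
      (∀ i, 0 ≤ y i ∧ y i ≤ 1) →
      (∀ i j : Fin n, G.Adj i j → y i = 0 ∨ y j = 0) →
      y ∈ convexHull ℝ {y : Fin n → ℝ | (∀ i, y i = 0 ∨ y i = 1) ∧
          ∀ i j : Fin n, G.Adj i j → y i + y j ≤ 1} := by
  intro k
  induction k with
  | zero =>
    intro y hcard hbd hst
    apply subset_convexHull
    have hint : ∀ i, y i = 0 ∨ y i = 1 := by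
      intro i
      by_contra h
      push_neg at h
      have : i ∈ Finset.univ.filter (fun i => y i ≠ 0 ∧ y i ≠ 1) := by
        simp [h.1, h.2]
      have := Finset.card_pos.mpr ⟨i, this⟩
      omega
    refine ⟨hint, fun i j hadj => ?_⟩
    rcases hst i j hadj with h | h
    · rw [h]; linarith [(hbd j).2]
    · rw [h]; linarith [(hbd i).2]
  | succ k ih =>
    intro y hcard hbd hst
    by_cases hall : ∀ i, y i = 0 ∨ y i = 1
    · apply subset_convexHull
      refine ⟨hall, fun i j hadj => ?_⟩
      rcases hst i j hadj with h | h
      · rw [h]; linarith [(hbd j).2]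
      · rw [h]; linarith [(hbd i).2]
    · push_neg at hall
      obtain ⟨i, hi0, hi1⟩ := hall
      set y0 := Function.update y i 0 with hy0
      set y1 := Function.update y i 1 with hy1
      have hsub : ∀ z : Fin n → ℝ, z = Function.update y i 0 ∨ z = Function.update y i 1 →
          (Finset.univ.filter (fun j => z j ≠ 0 ∧ z j ≠ 1)).card ≤ k := by
        intro z hz
        have hss : Finset.univ.filter (fun j => z j ≠ 0 ∧ z j ≠ 1) ⊆
            (Finset.univ.filter (fun j => y j ≠ 0 ∧ y j ≠ 1)).erase i := by
          intro j hj
          simp only [Finset.mem_filter, Finset.mem_univ, true_and] at hj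
          rcases eq_or_ne j i with rfl | hne
          · exfalso; rcases hz with rfl | rfl <;> simp [Function.update_self] at hj
          · have : z j = y j := by rcases hz with rfl | rfl <;> simp [Function.update_of_ne hne]
            rw [this] at hj
            exact Finset.mem_erase.mpr ⟨hne, by simp [hj.1, hj.2]⟩
        have h1 := Finset.card_le_card hss
        have h2 : i ∈ Finset.univ.filter (fun j => y j ≠ 0 ∧ y j ≠ 1) := by simp [hi0, hi1]
        have := Finset.card_erase_of_mem h2
        omega
      have hmem0 : y0 ∈ convexHull ℝ {y : Fin n → ℝ | (∀ i, y i = 0 ∨ y i = 1) ∧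
          ∀ i j : Fin n, G.Adj i j → y i + y j ≤ 1} := by
        apply ih y0 (hsub y0 (Or.inl rfl))
        · intro j
          rcases eq_or_ne j i with rfl | hne
          · simp [hy0]
          · simp [hy0, Function.update_of_ne hne]; exact hbd j
        · intro a b hadj
          rcases eq_or_ne a i with rfl | hna
          · left; simp [hy0]
          rcases eq_or_ne b i with rfl | hnb
          · right; simp [hy0]
          simp only [hy0, Function.update_of_ne hna, Function.update_of_ne hnb]
          exact hst a b hadj
      have hmem1 : y1 ∈ convexHull ℝ {y : Fin n → ℝ | (∀ i, y i = 0 ∨ y i = 1) ∧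
          ∀ i j : Fin n, G.Adj i j → y i + y j ≤ 1} := by
        apply ih y1 (hsub y1 (Or.inr rfl))
        · intro j
          rcases eq_or_ne j i with rfl | hne
          · simp [hy1]
          · simp [hy1, Function.update_of_ne hne]; exact hbd j
        · intro a b hadj
          rcases eq_or_ne a i with rfl | hna
          · right
            have hG := G.ne_of_adj hadj
            have : y b = 0 := (hst a b hadj).resolve_left hi0
            simpa [hy1, Function.update_of_ne (Ne.symm hG)] using this
          rcases eq_or_ne b i with rfl | hnb
          · left
            have hG := G.ne_of_adj hadj
            have : y a = 0 := (hst a b hadj).resolve_right hi0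
            simpa [hy1, Function.update_of_ne hG] using this
          simp only [hy1, Function.update_of_ne hna, Function.update_of_ne hnb]
          exact hst a b hadj
      have hcomb := (convex_convexHull ℝ {y : Fin n → ℝ | (∀ i, y i = 0 ∨ y i = 1) ∧
          ∀ i j : Fin n, G.Adj i j → y i + y j ≤ 1}) hmem0 hmem1
          (by linarith [(hbd i).2] : (0:ℝ) ≤ 1 - y i) (hbd i).1 (by ring)
      convert hcomb using 1
      funext j
      rcases eq_or_ne j i with rfl | hne
      · simp [hy0, hy1]
      · simp [hy0, hy1, Function.update_of_ne hne]
        ring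

/-- Corollary 2: if `αᵀy ≤ β` is valid for the stable set polytope of `G`, then
for every `T ∈ 𝒯` both `αᵀv_T ≤ β q_T` and `αᵀv̄_T ≤ β q̄_T` are valid for
`conv(𝒮_𝒯)`. -/
theorem stmt_14 {n : ℕ} (G : SimpleGraph (Fin n)) (𝒯 : Finset (Finset (Fin n)))
    (hdisj : ∀ T₁ ∈ 𝒯, ∀ T₂ ∈ 𝒯, T₁ ≠ T₂ → ∀ i, i ∈ T₁ → i ∉ T₂)
    (hcover : ∀ i j : Fin n, G.Adj i j → (∃ T ∈ 𝒯, i ∈ T) ∨ (∃ T ∈ 𝒯, j ∈ T))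
    (hfeas : ∀ T ∈ 𝒯, ∀ i ∈ T, ∀ j : Fin n, G.Adj i j ↔ ∃ i' ∈ T, G.Adj i' j)
    (α : Fin n → ℝ) (β : ℝ)
    (hvalid : ∀ y ∈ convexHull ℝ
        {y : Fin n → ℝ | (∀ i, y i = 0 ∨ y i = 1) ∧
          ∀ i j : Fin n, G.Adj i j → y i + y j ≤ 1},
      α ⬝ᵥ y ≤ β) :
    ∀ w ∈ convexHull ℝ (STset G 𝒯), ∀ T : {T // T ∈ 𝒯},
      α ⬝ᵥ w.2.2.2.1 T ≤ β * w.2.1 T ∧ α ⬝ᵥ w.2.2.2.2 T ≤ β * w.2.2.1 T := by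
  intro w hw T
  set S : Set (Pt n 𝒯) := {w | α ⬝ᵥ w.2.2.2.1 T ≤ β * w.2.1 T ∧
      α ⬝ᵥ w.2.2.2.2 T ≤ β * w.2.2.1 T} with hSdef
  have hconv : Convex ℝ S := by
    intro w1 h1 w2 h2 a b ha hb hab
    obtain ⟨h11, h12⟩ := h1
    obtain ⟨h21, h22⟩ := h2
    constructor <;>
    · show α ⬝ᵥ (a • _ + b • _) ≤ β * (a • _ + b • _)
      simp only [dotProduct_add, dotProduct_smul, smul_eq_mul]
      nlinarith [mul_le_mul_of_nonneg_left h11 ha, mul_le_mul_of_nonneg_left h21 hb,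
        mul_le_mul_of_nonneg_left h12 ha, mul_le_mul_of_nonneg_left h22 hb]
  have hsub : STset G 𝒯 ⊆ S := by
    intro w hw
    obtain ⟨hbd, hT⟩ := hw
    -- y is in the stable set polytope
    have hy : α ⬝ᵥ w.1 ≤ β := by
      apply hvalid
      apply mem_hull_of_stable_support G (Finset.univ.filter
        (fun i => w.1 i ≠ 0 ∧ w.1 i ≠ 1)).card w.1 le_rfl hbd
      intro i j hadj
      rcases hcover i j hadj with ⟨T', hT', hiT'⟩ | ⟨T', hT', hjT'⟩
      · obtain ⟨hvb0, hv0, _, _, hsum, hq, hqb, hvq, hvbq⟩ := hT ⟨T', hT'⟩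
        have h1 : w.2.2.1 ⟨T', hT'⟩ * w.1 i = 0 := by
          rw [← hvbq i]; exact hvb0 i hiT'
        have h2 : w.2.1 ⟨T', hT'⟩ * w.1 j = 0 := by
          rw [← hvq j]; exact hv0 j ⟨i, hiT', hadj⟩
        rcases mul_eq_zero.mp h1 with hqb0 | hy0
        · right
          have : w.2.1 ⟨T', hT'⟩ = 1 := by linarith
          rcases mul_eq_zero.mp h2 with h | h
          · exact absurd h (by rw [this]; norm_num)
          · exact h
        · left; exact hy0
      · obtain ⟨hvb0, hv0, _, _, hsum, hq, hqb, hvq, hvbq⟩ := hT ⟨T', hT'⟩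
        have h1 : w.2.2.1 ⟨T', hT'⟩ * w.1 j = 0 := by
          rw [← hvbq j]; exact hvb0 j hjT'
        have h2 : w.2.1 ⟨T', hT'⟩ * w.1 i = 0 := by
          rw [← hvq i]; exact hv0 i ⟨j, hjT', hadj.symm⟩
        rcases mul_eq_zero.mp h1 with hqb0 | hy0
        · left
          have : w.2.1 ⟨T', hT'⟩ = 1 := by linarith
          rcases mul_eq_zero.mp h2 with h | h
          · exact absurd h (by rw [this]; norm_num)
          · exact h
        · right; exact hy0
    obtain ⟨hvb0, hv0, _, _, hsum, hq, hqb, hvq, hvbq⟩ := hT T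
    constructor
    · have : α ⬝ᵥ w.2.2.2.1 T = w.2.1 T * (α ⬝ᵥ w.1) := by
        simp only [dotProduct, Finset.mul_sum]
        exact Finset.sum_congr rfl (fun j _ => by rw [hvq j]; ring)
      rw [this, mul_comm β _]
      exact mul_le_mul_of_nonneg_left hy hq
    · have : α ⬝ᵥ w.2.2.2.2 T = w.2.2.1 T * (α ⬝ᵥ w.1) := by
        simp only [dotProduct, Finset.mul_sum]
        exact Finset.sum_congr rfl (fun j _ => by rw [hvbq j]; ring)
      rw [this, mul_comm β _]
      exact mul_le_mul_of_nonneg_left hy hqb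
  exact convexHull_min hsub hconv hw
end

section
/- Let C be a clique of a simple graph G = ([n],E), let 𝒯 be a feasible cover partition of G, and let T₁, T₂ ∈ 𝒯 be distinct with T₁ ∩ C ≠ ∅ and T₂ ∩ C ≠ ∅. If y ≥ 0 satisfies the complementarity constraints y_i·y_j = 0 for all {i,j} ∈ E, then y(T₁) = 0 or y(T₂) = 0 (where y(S) = Σ_{i∈S} y_i). -/
/-- Clique fact: if a clique `C` meets two distinct members `T₁, T₂` of a
feasible cover partition `𝒯`, and `y ≥ 0` satisfies the complementarity
constraints, then `y(T₁) = 0` or `y(T₂) = 0`. -/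
theorem stmt_16 {n : ℕ} (G : SimpleGraph (Fin n))
    (𝒯 : Finset (Finset (Fin n)))
    (hdisj : ∀ T₁ ∈ 𝒯, ∀ T₂ ∈ 𝒯, T₁ ≠ T₂ → ∀ i, i ∈ T₁ → i ∉ T₂)
    (hcover : ∀ i j : Fin n, G.Adj i j → (∃ T ∈ 𝒯, i ∈ T) ∨ (∃ T ∈ 𝒯, j ∈ T))
    (hfeas : ∀ T ∈ 𝒯, ∀ i ∈ T, ∀ j : Fin n, G.Adj i j ↔ ∃ i' ∈ T, G.Adj i' j)
    (C : Set (Fin n)) (hC : ∀ i ∈ C, ∀ j ∈ C, i ≠ j → G.Adj i j)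
    (T₁ T₂ : Finset (Fin n)) (hT₁ : T₁ ∈ 𝒯) (hT₂ : T₂ ∈ 𝒯) (hne : T₁ ≠ T₂)
    (hT₁C : ∃ a ∈ C, a ∈ T₁) (hT₂C : ∃ a ∈ C, a ∈ T₂)
    (y : Fin n → ℝ) (hy0 : ∀ i, 0 ≤ y i)
    (hcomp : ∀ i j : Fin n, G.Adj i j → y i * y j = 0) :
    (∑ i ∈ T₁, y i) = 0 ∨ (∑ i ∈ T₂, y i) = 0 := by
  by_contra h
  push_neg at h
  obtain ⟨h1, h2⟩ := h
  have e1 : ∃ j ∈ T₁, 0 < y j := by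
    by_contra he
    push_neg at he
    exact h1 (Finset.sum_eq_zero fun i hi => le_antisymm (he i hi) (hy0 i))
  have e2 : ∃ j ∈ T₂, 0 < y j := by
    by_contra he
    push_neg at he
    exact h2 (Finset.sum_eq_zero fun i hi => le_antisymm (he i hi) (hy0 i))
  obtain ⟨j₁, hj₁, hy₁⟩ := e1
  obtain ⟨j₂, hj₂, hy₂⟩ := e2
  obtain ⟨a, haC, haT⟩ := hT₁C
  obtain ⟨b, hbC, hbT⟩ := hT₂C
  have hab : a ≠ b := fun hab => hdisj T₁ hT₁ T₂ hT₂ hne a haT (hab ▸ hbT)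
  have hadj : G.Adj a b := hC a haC b hbC hab
  have hj₁b : G.Adj j₁ b := (hfeas T₁ hT₁ j₁ hj₁ b).2 ⟨a, haT, hadj⟩
  have hj₂j₁ : G.Adj j₂ j₁ := (hfeas T₂ hT₂ j₂ hj₂ j₁).2 ⟨b, hbT, hj₁b.symm⟩
  have := hcomp j₂ j₁ hj₂j₁
  nlinarith
end

section
/- Let p* be a point of BQP_{2m,n} (the convex hull of binary points (y,q,q̄,v,v̄) with v_T = q_T·y, v̄_T = q̄_T·y) written as a convex combination p* = Σ_k λ_k p^k of binary points p^k of BQP_{2m,n}, and suppose p* satisfies q_{T̃} + q̄_{T̃} = 1 and v_{T̃} + v̄_{T̃} = y for a fixed index T̃. Then the points p̃^k obtained from p^k by replacing q̄_{T̃} with 1 − q̄_{T̃} (and v̄_{T̃} with (1 − q̄_{T̃})·y^k) whenever q_{T̃}^k + q̄_{T̃}^k ≠ 1, are binary points of BQP_{2m,n} satisfying q_{T̃} + q̄_{T̃} = 1, and p* = Σ_k λ_k p̃^k. -/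
/-- The flipping lemma inside `BQP_{2m,n}`: if `p* = Σ_k λ_k p^k` is a convex
combination of binary BQP points satisfying `q*_{T̃} + q̄*_{T̃} = 1` and
`v*_{T̃} + v̄*_{T̃} = y*`, then the points obtained by replacing `q̄_{T̃}` with
`1 − q̄_{T̃}` (and `v̄_{T̃}` with `(1 − q̄_{T̃})·y`) whenever `q_{T̃} + q̄_{T̃} ≠ 1`
are binary BQP points with `q_{T̃} + q̄_{T̃} = 1`, and the convex combination is
unchanged. -/
theorem stmt_18 {n m K : ℕ}
    (lam : Fin K → ℝ) (hlam0 : ∀ k, 0 ≤ lam k) (hlam1 : ∑ k, lam k = 1)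
    (y : Fin K → Fin n → ℝ) (q qb : Fin K → Fin m → ℝ)
    (v vb : Fin K → Fin m → Fin n → ℝ)
    (hybin : ∀ k j, y k j = 0 ∨ y k j = 1)
    (hqbin : ∀ k T, q k T = 0 ∨ q k T = 1)
    (hqbbin : ∀ k T, qb k T = 0 ∨ qb k T = 1)
    (hv : ∀ k T j, v k T j = q k T * y k j)
    (hvb : ∀ k T j, vb k T j = qb k T * y k j)
    (T0 : Fin m)
    (hq1 : (∑ k, lam k * q k T0) + (∑ k, lam k * qb k T0) = 1)
    (hvy : ∀ j, (∑ k, lam k * v k T0 j) + (∑ k, lam k * vb k T0 j)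
      = ∑ k, lam k * y k j)
    -- the flipped points
    (qb' : Fin K → Fin m → ℝ) (vb' : Fin K → Fin m → Fin n → ℝ)
    (hqb' : ∀ k, (q k T0 + qb k T0 = 1 → qb' k = qb k) ∧
      (q k T0 + qb k T0 ≠ 1 →
        qb' k = Function.update (qb k) T0 (1 - qb k T0)))
    (hvb' : ∀ k, (q k T0 + qb k T0 = 1 → vb' k = vb k) ∧
      (q k T0 + qb k T0 ≠ 1 →
        vb' k = Function.update (vb k) T0 (fun j => (1 - qb k T0) * y k j))) :
    (∀ k, (∀ T, qb' k T = 0 ∨ qb' k T = 1) ∧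
      (∀ T j, vb' k T j = qb' k T * y k j) ∧
      q k T0 + qb' k T0 = 1) ∧
    (∀ T, ∑ k, lam k * qb' k T = ∑ k, lam k * qb k T) ∧
    (∀ T j, ∑ k, lam k * vb' k T j = ∑ k, lam k * vb k T j) := by
  -- in the "flip" case, q = qb at T0
  have heq : ∀ k, q k T0 + qb k T0 ≠ 1 → q k T0 = qb k T0 := by
    intro k h
    rcases hqbin k T0 with h1 | h1 <;> rcases hqbbin k T0 with h2 | h2
    · rw [h1, h2]
    · exact absurd (by rw [h1, h2]; norm_num) h
    · exact absurd (by rw [h1, h2]; norm_num) h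
    · rw [h1, h2]
  -- qb' agrees with qb off T0
  have hoff : ∀ k T, T ≠ T0 → qb' k T = qb k T := by
    intro k T hT
    by_cases h : q k T0 + qb k T0 = 1
    · rw [(hqb' k).1 h]
    · rw [(hqb' k).2 h, Function.update_of_ne hT]
  have hoffv : ∀ k T, T ≠ T0 → vb' k T = vb k T := by
    intro k T hT
    by_cases h : q k T0 + qb k T0 = 1
    · rw [(hvb' k).1 h]
    · rw [(hvb' k).2 h, Function.update_of_ne hT]
  -- key difference identities at T0
  have keyq : ∀ k, qb' k T0 = qb k T0 + (1 - q k T0 - qb k T0) := by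
    intro k
    by_cases h : q k T0 + qb k T0 = 1
    · rw [(hqb' k).1 h]; linarith
    · rw [(hqb' k).2 h, Function.update_self]
      have := heq k h; linarith
  have keyv : ∀ k j, vb' k T0 j = vb k T0 j + (1 - q k T0 - qb k T0) * y k j := by
    intro k j
    by_cases h : q k T0 + qb k T0 = 1
    · rw [(hvb' k).1 h]
      have : 1 - q k T0 - qb k T0 = 0 := by linarith
      rw [this]; ring
    · rw [(hvb' k).2 h, Function.update_self]
      have hq := heq k h
      rw [hvb, hq]; ring
  refine ⟨?_, ?_, ?_⟩
  · intro k
    by_cases h : q k T0 + qb k T0 = 1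
    · refine ⟨fun T => by rw [(hqb' k).1 h]; exact hqbbin k T,
        fun T j => by rw [(hvb' k).1 h, (hqb' k).1 h]; exact hvb k T j,
        by rw [(hqb' k).1 h]; exact h⟩
    · have hq := heq k h
      refine ⟨fun T => ?_, fun T j => ?_, ?_⟩
      · by_cases hT : T = T0
        · rw [hT] at *; clear hT; rw [(hqb' k).2 h, Function.update_self]
          rcases hqbbin k T0 with h2 | h2 <;> rw [h2] <;> norm_num
        · rw [hoff k T hT]; exact hqbbin k T
      · by_cases hT : T = T0
        · rw [hT] at *; clear hT
          rw [(hvb' k).2 h, (hqb' k).2 h, Function.update_self,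
            Function.update_self]
        · rw [hoffv k T hT, hoff k T hT]; exact hvb k T j
      · rw [keyq k]; linarith
  · intro T
    by_cases hT : T = T0
    · rw [hT] at *; clear hT
      have : ∀ k ∈ Finset.univ, lam k * qb' k T0
          = lam k * qb k T0 + (lam k - lam k * q k T0 - lam k * qb k T0) := by
        intro k _; rw [keyq k]; ring
      rw [Finset.sum_congr rfl this, Finset.sum_add_distrib]
      have : ∑ k, (lam k - lam k * q k T0 - lam k * qb k T0)
          = (∑ k, lam k) - (∑ k, lam k * q k T0) - (∑ k, lam k * qb k T0) := by
        rw [Finset.sum_sub_distrib, Finset.sum_sub_distrib]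
      rw [this, hlam1]
      linarith
    · exact Finset.sum_congr rfl fun k _ => by rw [hoff k T hT]
  · intro T j
    by_cases hT : T = T0
    · rw [hT] at *; clear hT
      have hc : ∀ k ∈ Finset.univ, lam k * vb' k T0 j
          = lam k * vb k T0 j
            + (lam k * y k j - lam k * v k T0 j - lam k * vb k T0 j) := by
        intro k _; rw [keyv k j, hv, hvb]; ring
      rw [Finset.sum_congr rfl hc, Finset.sum_add_distrib]
      have : ∑ k, (lam k * y k j - lam k * v k T0 j - lam k * vb k T0 j)
          = (∑ k, lam k * y k j) - (∑ k, lam k * v k T0 j)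
            - (∑ k, lam k * vb k T0 j) := by
        rw [Finset.sum_sub_distrib, Finset.sum_sub_distrib]
      rw [this]
      have := hvy j
      linarith
    · exact Finset.sum_congr rfl fun k _ => by rw [hoffv k T hT]
end
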